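/- Let i ≥ 0 and let γ and α be down-nodes of T̄_i such that γ is a proper ancestor of α and the path from γ to α contains no internal down-nodes. Then this path contains at most one internal up-node. -/

import Mathlib

namespace DynStr

/-- The set `𝒮` of symbols over the alphabet `α`:
base letters, pairing symbols `(S₁,S₂)` and power symbols `(S,k)`. -/
inductive Sym (α : Type) : Type where
  | base : α → Sym α
  | pair : Sym α → Sym α → Sym α
  | pow  : Sym α → ℕ → Sym α
deriving DecidableEq

variable {α : Type} [DecidableEq α]

/-- The string over `Σ` generated by a symbol. -/
def strSym : Sym α → List α
  | .base a => [a]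
  | .pair s t => strSym s ++ strSym t
  | .pow s k => (List.replicate k (strSym s)).flatten

/-- Run-length pairs: the maximal blocks of equal elements, with multiplicities. -/
def runs {β : Type} [DecidableEq β] : List β → List (β × ℕ)
  | [] => []
  | a :: l =>
    match runs l with
    | [] => [(a, 1)]
    | (b, k) :: rest => if a = b then (b, k + 1) :: rest else (a, 1) :: (b, k) :: rest

/-- `|RLE(w)|`: the number of blocks in the run-length encoding of `w`. -/
def rleLen {β : Type} [DecidableEq β] (w : List β) : ℕ := (runs w).length

/-- The `Rle` function: replace every maximal block `S^k` with `k ≥ 2` by `(S,k)`. -/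
def rle : List (Sym α) → List (Sym α) :=
  fun w => (runs w).map fun p => if 2 ≤ p.2 then Sym.pow p.1 p.2 else p.1

/-- `Compressᵢ` with bit function `g`: replace every (disjoint, greedily-from-the-left
determined, i.e. uniquely determined) adjacent pair `S S'` with `g S = 0`, `g S' = 1`
by the symbol `(S,S')`. -/
def compress (g : Sym α → Bool) : List (Sym α) → List (Sym α)
  | [] => []
  | [a] => [a]
  | a :: b :: l =>
    if g a = false ∧ g b = true then Sym.pair a b :: compress g l
    else a :: compress g (b :: l)

/-- `shrinkᵢ` (for `i ≥ 1`): `Rle` for odd `i`, `Compress_{i/2}` for even `i`. -/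
def shrinkStep (h : ℕ → Sym α → Bool) (i : ℕ) (w : List (Sym α)) : List (Sym α) :=
  if i % 2 = 1 then rle w else compress (h (i / 2)) w

/-- `shrink^i`, the iterated parsing function. -/
def shrinkIter (h : ℕ → Sym α → Bool) : ℕ → List (Sym α) → List (Sym α)
  | 0, w => w
  | i + 1, w => shrinkStep h (i + 1) (shrinkIter h i w)

/-- `Depth(w)`: the least `i` with `|shrink^i(w)| = 1`. -/
noncomputable def depth (h : ℕ → Sym α → Bool) (w : List (Sym α)) : ℕ :=
  sInf {i | (shrinkIter h i w).length = 1}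

/-- A string over `Σ` viewed as a string of (base) symbols. -/
def embed (w : List α) : List (Sym α) := w.map Sym.base

/-- Sizes of the blocks formed by `Compress` with bit function `g`. -/
def compBlocks (g : Sym α → Bool) : List (Sym α) → List ℕ
  | [] => []
  | [_] => [1]
  | a :: b :: l =>
    if g a = false ∧ g b = true then 2 :: compBlocks g l
    else 1 :: compBlocks g (b :: l)

/-- Sizes of the blocks formed by `shrinkᵢ`. -/
def stepBlocks (h : ℕ → Sym α → Bool) (i : ℕ) (w : List (Sym α)) : List ℕ :=
  if i % 2 = 1 then (runs w).map Prod.snd else compBlocks (h (i / 2)) w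

/-- Sizes of the blocks formed when passing from level `l` to level `l+1` of the
uncompressed parse tree of `w`. -/
def blocksAt (h : ℕ → Sym α → Bool) (w : List (Sym α)) (l : ℕ) : List ℕ :=
  stepBlocks h (l + 1) (shrinkIter h l w)

/-- Index of the block (in a list of block sizes) containing position `j`. -/
def blockOf : List ℕ → ℕ → ℕ
  | [], _ => 0
  | b :: bs, j => if j < b then 0 else blockOf bs (j - b) + 1

/-- A node of the uncompressed parse tree `T̄(w)`: the `idx`-th symbol occurrence
(0-indexed) of `shrink^level(w)`. -/
structure TNode where
  level : ℕ
  idx : ℕ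
deriving DecidableEq

/-- `v` is an actual node of `T̄(w)`. -/
def IsNode (h : ℕ → Sym α → Bool) (w : List (Sym α)) (v : TNode) : Prop :=
  v.level ≤ depth h w ∧ v.idx < (shrinkIter h v.level w).length

/-- The signature (symbol) of a node. -/
def sigAt (h : ℕ → Sym α → Bool) (w : List (Sym α)) (v : TNode) : Option (Sym α) :=
  (shrinkIter h v.level w)[v.idx]?

/-- Index in `w` (i.e. on level 0) of the first position below the `j`-th symbol of
`shrink^l(w)`. -/
def startIdx (h : ℕ → Sym α → Bool) (w : List (Sym α)) : ℕ → ℕ → ℕ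
  | 0, j => j
  | l + 1, j => startIdx h w l (((blocksAt h w l).take j).sum)

/-- The first level-0 position of the fragment represented by `v`. -/
def begIdx (h : ℕ → Sym α → Bool) (w : List (Sym α)) (v : TNode) : ℕ :=
  startIdx h w v.level v.idx

/-- One past the last level-0 position of the fragment represented by `v`. -/
def endIdx (h : ℕ → Sym α → Bool) (w : List (Sym α)) (v : TNode) : ℕ :=
  startIdx h w v.level (v.idx + 1)

/-- `par(v)`. -/
def parNode (h : ℕ → Sym α → Bool) (w : List (Sym α)) (v : TNode) : TNode :=
  ⟨v.level + 1, blockOf (blocksAt h w v.level) v.idx⟩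

/-- The parent of `v` exists in `T̄(w)`. -/
def HasPar (h : ℕ → Sym α → Bool) (w : List (Sym α)) (v : TNode) : Prop :=
  IsNode h w v ∧ v.level < depth h w

/-- The number of children of `v` (for `v.level ≥ 1`). -/
def degree (h : ℕ → Sym α → Bool) (w : List (Sym α)) (v : TNode) : ℕ :=
  (blocksAt h w (v.level - 1)).getD v.idx 0

/-- `child(v,k)`, the `k`-th child of `v` (`k` is 1-indexed). -/
def childNode (h : ℕ → Sym α → Bool) (w : List (Sym α)) (v : TNode) (k : ℕ) : TNode :=
  ⟨v.level - 1, ((blocksAt h w (v.level - 1)).take v.idx).sum + (k - 1)⟩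

/-- The `k`-th child of `v` exists in `T̄(w)`. -/
def HasChild (h : ℕ → Sym α → Bool) (w : List (Sym α)) (v : TNode) (k : ℕ) : Prop :=
  IsNode h w v ∧ 1 ≤ v.level ∧ 1 ≤ k ∧ k ≤ degree h w v

/-- `left(v)`. -/
def leftNode (v : TNode) : TNode := ⟨v.level, v.idx - 1⟩

/-- `right(v)`. -/
def rightNode (v : TNode) : TNode := ⟨v.level, v.idx + 1⟩

/-- `left(v)` exists in `T̄(w)`. -/
def HasLeft (h : ℕ → Sym α → Bool) (w : List (Sym α)) (v : TNode) : Prop :=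
  IsNode h w v ∧ 1 ≤ v.idx

/-- `right(v)` exists in `T̄(w)`. -/
def HasRight (h : ℕ → Sym α → Bool) (w : List (Sym α)) (v : TNode) : Prop :=
  IsNode h w v ∧ v.idx + 1 < (shrinkIter h v.level w).length

/-- `v'` is the counterpart (`v ≈ v'`) of the node `v` of `T̄(w)` with respect to the
extension `x·w·y`: a node of `T̄(xwy)` of the same level with the same signature,
representing the fragment of `xwy` naturally corresponding to the fragment of `w`
represented by `v`. -/
def Counterpart (h : ℕ → Sym α → Bool) (x w y : List α) (v v' : TNode) : Prop :=
  IsNode h (embed (x ++ w ++ y)) v' ∧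
  v'.level = v.level ∧
  sigAt h (embed (x ++ w ++ y)) v' = sigAt h (embed w) v ∧
  begIdx h (embed (x ++ w ++ y)) v' = x.length + begIdx h (embed w) v ∧
  endIdx h (embed (x ++ w ++ y)) v' = x.length + endIdx h (embed w) v

/-- `v` is preserved in the extension `x·w·y`. -/
def Preserved (h : ℕ → Sym α → Bool) (x w y : List α) (v : TNode) : Prop :=
  ∃ v', Counterpart h x w y v v'

/-- `v` is right context-insensitive: preserved in every right extension. -/
def RightCI (h : ℕ → Sym α → Bool) (w : List α) (v : TNode) : Prop :=
  ∀ y : List α, Preserved h [] w y v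

/-- `v` is left context-insensitive: preserved in every left extension. -/
def LeftCI (h : ℕ → Sym α → Bool) (w : List α) (v : TNode) : Prop :=
  ∀ x : List α, Preserved h x w [] v

/-- `v` is context-insensitive: preserved in every extension. -/
def ContextIns (h : ℕ → Sym α → Bool) (w : List α) (v : TNode) : Prop :=
  ∀ x y : List α, Preserved h x w y v

/-- `u` is a (not necessarily proper) ancestor of `v` in `T̄(w)`. -/
def Ancestor (h : ℕ → Sym α → Bool) (w : List (Sym α)) (u v : TNode) : Prop :=
  v.level ≤ u.level ∧ begIdx h w u ≤ begIdx h w v ∧ endIdx h w v ≤ endIdx h w u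

/-- `u` is a proper ancestor of `v`. -/
def ProperAnc (h : ℕ → Sym α → Bool) (w : List (Sym α)) (u v : TNode) : Prop :=
  Ancestor h w u v ∧ u ≠ v

/-- The fragments of the listed nodes tile `w[a..]` consecutively from left to right. -/
def chainFrom (h : ℕ → Sym α → Bool) (w : List (Sym α)) : ℕ → List TNode → Prop
  | a, [] => a = w.length
  | a, v :: L => begIdx h w v = a ∧ chainFrom h w (endIdx h w v) L

/-- `L` is a layer of the uncompressed parse tree `T̄(w)`, listed from left to right:
every leaf has exactly one ancestor in `L` (equivalently, the fragments of
the nodes of `L` tile `w`). -/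
def IsBarLayer (h : ℕ → Sym α → Bool) (w : List (Sym α)) (L : List TNode) : Prop :=
  (∀ v ∈ L, IsNode h w v) ∧ chainFrom h w 0 L

/-- `v` is a node of the compressed parse tree `T(w)` (obtained from `T̄(w)` by
dissolving nodes with exactly one child). -/
def InCompTree (h : ℕ → Sym α → Bool) (w : List (Sym α)) (v : TNode) : Prop :=
  IsNode h w v ∧ (v.level = 0 ∨ 2 ≤ degree h w v)

/-- `L` is a layer of the compressed parse tree `T(w)`, listed from left to right. -/
def IsCompLayer (h : ℕ → Sym α → Bool) (w : List (Sym α)) (L : List TNode) : Prop :=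
  (∀ v ∈ L, InCompTree h w v) ∧ chainFrom h w 0 L

/-- `u` is the parent of `v` in the compressed parse tree `T(w)`:
the nearest proper ancestor of `v` that is a node of `T(w)`. -/
def CompParent (h : ℕ → Sym α → Bool) (w : List (Sym α)) (u v : TNode) : Prop :=
  InCompTree h w u ∧ InCompTree h w v ∧ ProperAnc h w u v ∧
  ∀ z, InCompTree h w z → ProperAnc h w z v → Ancestor h w z u

/-- `D` is the decomposition of `w` corresponding to the layer `L` of `T̄(w)`. -/
def IsDecompOf (h : ℕ → Sym α → Bool) (w : List α) (D : List (Sym α)) (L : List TNode) : Prop :=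
  IsBarLayer h (embed w) L ∧ L.map (sigAt h (embed w)) = D.map some

/-- `D` is a decomposition of `w`. -/
def IsDecomp (h : ℕ → Sym α → Bool) (w : List α) (D : List (Sym α)) : Prop :=
  ∃ L, IsDecompOf h w D L

/-- `D` is a context-insensitive decomposition of `w`. -/
def IsCIDecomp (h : ℕ → Sym α → Bool) (w : List α) (D : List (Sym α)) : Prop :=
  ∃ L, IsDecompOf h w D L ∧ ∀ v ∈ L, ContextIns h w v

/-- `D` is a right context-insensitive decomposition of `w`. -/
def IsRightCIDecomp (h : ℕ → Sym α → Bool) (w : List α) (D : List (Sym α)) : Prop :=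
  ∃ L, IsDecompOf h w D L ∧ ∀ v ∈ L, RightCI h w v

/-- `D` is a left context-insensitive decomposition of `w`. -/
def IsLeftCIDecomp (h : ℕ → Sym α → Bool) (w : List α) (D : List (Sym α)) : Prop :=
  ∃ L, IsDecompOf h w D L ∧ ∀ v ∈ L, LeftCI h w v

/-- The level of a symbol. -/
noncomputable def symLevel (h : ℕ → Sym α → Bool) : Sym α → ℕ
  | .base _ => 0
  | .pow s _ => symLevel h s + 1
  | .pair s t =>
      sInf {l | l % 2 = 0 ∧ max (symLevel h s) (symLevel h t) < l ∧
                h (l / 2) s = false ∧ h (l / 2) t = true}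

/-- `S` is a consistent symbol: it occurs in `shrink^i(w)` for some nonempty `w ∈ Σ⁺`. -/
def Consistent (h : ℕ → Sym α → Bool) (S : Sym α) : Prop :=
  ∃ (w : List α) (i : ℕ), w ≠ [] ∧ S ∈ shrinkIter h i (embed w)

/-- Longest common prefix of two lists. -/
def lcp {β : Type} [DecidableEq β] : List β → List β → List β
  | a :: l, b :: m => if a = b then a :: lcp l m else []
  | _, _ => []

end DynStr
namespace DynStr

variable {α : Type} [DecidableEq α]

/-- The nodes of the trie `T̄ᵢ` of the strings `shrink^i(w)` for `w ∈ Wᵢ`,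
identified with their values (prefixes of the stored strings). -/
def trieNodes (h : ℕ → Sym α → Bool) (W : Finset (List α)) (i : ℕ) :
    Set (List (Sym α)) :=
  {p | ∃ w ∈ W, i ≤ depth h (embed w) ∧ p <+: shrinkIter h i (embed w)}

/-- `leafᵢ(w)`, the terminal node of `T̄ᵢ` with value `shrink^i(w)`. -/
def leafNode (h : ℕ → Sym α → Bool) (i : ℕ) (w : List α) : List (Sym α) :=
  shrinkIter h i (embed w)

/-- `b = link(a)` for a node `a` of `T̄ᵢ` (`i > 0`): `b` is the node of `T̄_{i-1}`
with `val(a) = shrinkᵢ(val(b))`. -/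
def IsLink (h : ℕ → Sym α → Bool) (W : Finset (List α)) (i : ℕ)
    (a b : List (Sym α)) : Prop :=
  a ∈ trieNodes h W i ∧ b ∈ trieNodes h W (i - 1) ∧ a = shrinkStep h i b

/-- `p` is a down-node of `T̄ᵢ`: the root, a branching node, or a terminal node. -/
def IsDown (h : ℕ → Sym α → Bool) (W : Finset (List α)) (i : ℕ)
    (p : List (Sym α)) : Prop :=
  p ∈ trieNodes h W i ∧
  (p = [] ∨
   (∃ S T : Sym α, S ≠ T ∧ p ++ [S] ∈ trieNodes h W i ∧ p ++ [T] ∈ trieNodes h W i) ∨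
   ∃ w ∈ W, i ≤ depth h (embed w) ∧ p = leafNode h i w)

/-- `p` is an up-node of `T̄ᵢ`: it is `link(a)` for some down-node `a` of `T̄_{i+1}`. -/
def IsUp (h : ℕ → Sym α → Bool) (W : Finset (List α)) (i : ℕ)
    (p : List (Sym α)) : Prop :=
  p ∈ trieNodes h W i ∧ ∃ a, IsDown h W (i + 1) a ∧ IsLink h W (i + 1) a p

/-- `p` is an explicit node of the partially compressed trie `Tᵢ`. -/
def IsExplicit (h : ℕ → Sym α → Bool) (W : Finset (List α)) (i : ℕ)
    (p : List (Sym α)) : Prop :=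
  IsDown h W i p ∨ IsUp h W i p

/-- `p` is the mount of `w` in `T̄ᵢ`: the lowest node of `T̄ᵢ` whose value is a
prefix of `shrink^i(w)`. -/
def Mount (h : ℕ → Sym α → Bool) (W : Finset (List α)) (i : ℕ)
    (w : List α) (p : List (Sym α)) : Prop :=
  p ∈ trieNodes h W i ∧ p <+: shrinkIter h i (embed w) ∧
  ∀ q ∈ trieNodes h W i, q <+: shrinkIter h i (embed w) → q <+: p

/-- `a` is the nearest explicit ancestor of the node `b` of `T̄ᵢ`. -/
def NearestExplAnc (h : ℕ → Sym α → Bool) (W : Finset (List α)) (i : ℕ)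
    (b a : List (Sym α)) : Prop :=
  IsExplicit h W i a ∧ a <+: b ∧ ∀ c, IsExplicit h W i c → c <+: b → c <+: a

/-- `d` is the nearest explicit descendant of the node `b` of `T̄ᵢ`. -/
def NearestExplDesc (h : ℕ → Sym α → Bool) (W : Finset (List α)) (i : ℕ)
    (b d : List (Sym α)) : Prop :=
  IsExplicit h W i d ∧ b <+: d ∧ ∀ c, IsExplicit h W i c → b <+: c → d <+: c

/-- `anch(s)`, the anchored string of a (positive-level) symbol. -/
def anch : Sym α → List α × List α
  | .base _ => ([], [])
  | .pair s t => (strSym s, strSym t)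
  | .pow s k => (strSym s, (List.replicate (k - 1) (strSym s)).flatten)

/-- The positions of the internal boundaries of the partition of `str(s)` induced
by the production rule of `s`. -/
def cuts : Sym α → List ℕ
  | .base _ => []
  | .pair s _ => [(strSym s).length]
  | .pow s k => (List.range (k - 1)).map fun j => (j + 1) * (strSym s).length

/-- `p` occurs in `str(s)` at (0-indexed) position `t`. -/
def OccAt (s : Sym α) (p : List α) (t : ℕ) : Prop :=
  t + p.length ≤ (strSym s).length ∧ ((strSym s).drop t).take p.length = p

/-- The occurrence of `p` in `str(s)` at position `t` is anchored: it crosses one of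
the internal boundaries of the partition induced by the production rule of `s`. -/
def AnchoredOccAt (s : Sym α) (p : List α) (t : ℕ) : Prop :=
  OccAt s p t ∧ ∃ c ∈ cuts s, t < c ∧ c < t + p.length

/-- The occurrence of `p` in `str(s)` at position `t` is anchored with main anchor
`pl|pr`: `pl` is the part of the occurrence before the first internal boundary it
crosses. -/
def MainAnchorAt (s : Sym α) (p : List α) (t : ℕ) (pl pr : List α) : Prop :=
  OccAt s p t ∧ ∃ c ∈ cuts s, t < c ∧ c < t + p.length ∧
    (∀ c' ∈ cuts s, t < c' → c ≤ c') ∧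
    pl = p.take (c - t) ∧ pr = p.drop (c - t)

end DynStr
namespace DynStr
section Dev1
set_option linter.unusedSectionVars false
set_option linter.unusedVariables false
variable {α : Type} [DecidableEq α]

lemma sym_pow_ne_self (s : Sym α) (k : ℕ) : Sym.pow s k ≠ s := by
  intro hh; have := congrArg (fun t => sizeOf t) hh; simp at this; omega

/-- image of one run under rle -/
def image (p : Sym α × ℕ) : Sym α := if 2 ≤ p.2 then Sym.pow p.1 p.2 else p.1

lemma rle_eq_map (v : List (Sym α)) : rle v = (runs v).map image := rfl

lemma image_fst_of_one {b : Sym α} : image (b, 1) = b := by simp [image]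

lemma image_eq_cases {b b' : Sym α} {k k' : ℕ} (hk : 1 ≤ k) (hk' : 1 ≤ k')
    (heq : image (b, k) = image (b', k')) :
    (b = b' ∧ k = k') ∨ (k = 1 ∧ 2 ≤ k' ∧ b = Sym.pow b' k') ∨
      (k' = 1 ∧ 2 ≤ k ∧ b' = Sym.pow b k) := by
  by_cases h2 : 2 ≤ k <;> by_cases h2' : 2 ≤ k' <;>
    simp [image, h2, h2'] at heq
  · exact Or.inl ⟨heq.1, heq.2⟩
  · right; right; exact ⟨by omega, h2, heq.symm⟩
  · right; left; exact ⟨by omega, h2', heq⟩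
  · left; exact ⟨heq, by omega⟩

lemma runs_nil : runs ([] : List (Sym α)) = [] := rfl

lemma runs_cons_nil {a : Sym α} {l : List (Sym α)} (hl : runs l = []) :
    runs (a :: l) = [(a,1)] := by
  rw [runs, hl]

lemma runs_cons_cons {a b : Sym α} {k : ℕ} {l : List (Sym α)} {rest : List (Sym α × ℕ)}
    (hl : runs l = (b,k) :: rest) :
    runs (a :: l) = if a = b then (b,k+1)::rest else (a,1)::(b,k)::rest := by
  rw [runs, hl]

lemma runs_eq_nil {l : List (Sym α)} : runs l = [] ↔ l = [] := by
  constructor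
  · intro hr
    cases l with
    | nil => rfl
    | cons a t =>
      rcases ht : runs t with _ | ⟨⟨b,k⟩, rest⟩
      · rw [runs_cons_nil ht] at hr; simp at hr
      · rw [runs_cons_cons ht] at hr
        by_cases hab : a = b <;> simp [hab] at hr
  · rintro rfl; rfl

def flatRuns (rl : List (Sym α × ℕ)) : List (Sym α) :=
  (rl.map fun p => List.replicate p.2 p.1).flatten

lemma flatRuns_nil : flatRuns ([] : List (Sym α × ℕ)) = [] := rfl

lemma flatRuns_cons (p : Sym α × ℕ) (rl : List (Sym α × ℕ)) :
    flatRuns (p :: rl) = List.replicate p.2 p.1 ++ flatRuns rl := by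
  simp [flatRuns]

lemma flatRuns_append (rl₁ rl₂ : List (Sym α × ℕ)) :
    flatRuns (rl₁ ++ rl₂) = flatRuns rl₁ ++ flatRuns rl₂ := by
  simp [flatRuns]

/-- `rl` is a valid run decomposition of `v`. -/
structure IsRuns (v : List (Sym α)) (rl : List (Sym α × ℕ)) : Prop where
  flat : v = flatRuns rl
  pos : ∀ p ∈ rl, 1 ≤ p.2
  chain : rl.Chain' fun p q => p.1 ≠ q.1

lemma runs_isRuns (v : List (Sym α)) : IsRuns v (runs v) := by
  induction v with
  | nil => exact ⟨rfl, by simp [runs_nil], List.isChain_nil⟩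
  | cons a l ih =>
    rcases ht : runs l with _ | ⟨⟨b,k⟩, rest⟩
    · have hl : l = [] := runs_eq_nil.mp ht
      subst hl
      rw [runs_cons_nil ht]
      refine ⟨?_, by simp, List.isChain_singleton _⟩
      show [a] = List.replicate 1 a ++ flatRuns []
      simp [flatRuns_nil]
    · rw [ht] at ih
      rw [runs_cons_cons ht]
      by_cases hab : a = b
      · rw [if_pos hab]
        subst hab
        have hf : l = List.replicate k a ++ flatRuns rest := by
          have := ih.flat
          rw [flatRuns_cons] at this
          exact this
        refine ⟨?_, ?_, ?_⟩
        · show a :: l = List.replicate (k+1) a ++ flatRuns rest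
          rw [List.replicate_succ, List.cons_append, ← hf]
        · intro p hp
          rcases List.mem_cons.mp hp with rfl | hp
          · simp
          · exact ih.pos p (List.mem_cons_of_mem _ hp)
        · have hch := ih.chain
          rcases rest with _ | ⟨q, rest'⟩
          · exact List.isChain_singleton _
          · simp only [List.Chain', List.isChain_cons_cons] at hch ⊢
            exact ⟨hch.1, hch.2⟩
      · rw [if_neg hab]
        refine ⟨?_, ?_, ?_⟩
        · show a :: l = List.replicate 1 a ++ flatRuns ((b,k) :: rest)
          rw [← ih.flat]; simp
        · intro p hp
          rcases List.mem_cons.mp hp with rfl | hp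
          · simp
          · exact ih.pos p hp
        · simp only [List.Chain', List.isChain_cons_cons]
          exact ⟨hab, ih.chain⟩

lemma isRuns_ext {v : List (Sym α)} {rl : List (Sym α × ℕ)} (hr : IsRuns v rl)
    {rl₁ : List (Sym α × ℕ)} {p q : Sym α × ℕ} {rl₂ : List (Sym α × ℕ)}
    (he : rl = rl₁ ++ p :: q :: rl₂) : p.1 ≠ q.1 := by
  have hc := hr.chain
  rw [he] at hc
  have hc := List.isChain_append.mp hc
  have := hc.2.1
  exact (List.isChain_cons_cons.mp this).1

lemma isRuns_infix {v : List (Sym α)} {rl : List (Sym α × ℕ)} (hr : IsRuns v rl)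
    {rl₁ rl₂ : List (Sym α × ℕ)} (he : rl = rl₁ ++ rl₂) : flatRuns rl₂ <:+: v := by
  rw [hr.flat, he, flatRuns_append]
  exact ⟨flatRuns rl₁, [], by simp⟩

end Dev1
end DynStr
namespace DynStr
section Dev2
set_option linter.unusedSectionVars false
set_option linter.unusedVariables false
variable {α : Type} [DecidableEq α]

lemma map_eq_append_cons {β γ : Type*} {f : β → γ} :
    ∀ {L : List β} {s t : List γ} {X : γ}, L.map f = s ++ X :: t →
      ∃ L₁ p L₂, L = L₁ ++ p :: L₂ ∧ L₁.map f = s ∧ f p = X ∧ L₂.map f = t := by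
  intro L
  induction L with
  | nil => intro s t X hmap; simp at hmap
  | cons a L' ih =>
    intro s t X hmap
    cases s with
    | nil =>
      simp only [List.map_cons, List.nil_append, List.cons.injEq] at hmap
      exact ⟨[], a, L', by simp, rfl, hmap.1, hmap.2⟩
    | cons x s' =>
      simp only [List.map_cons, List.cons_append, List.cons.injEq] at hmap
      obtain ⟨L₁, p, L₂, h1, h2, h3, h4⟩ := ih hmap.2
      exact ⟨a :: L₁, p, L₂, by rw [h1]; rfl, by simp [hmap.1, h2], h3, h4⟩

lemma replicate_two_prefix {b : Sym α} {k : ℕ} (hk : 2 ≤ k) :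
    [b, b] <+: List.replicate k b := by
  obtain ⟨m, rfl⟩ : ∃ m, k = m + 2 := ⟨k - 2, by omega⟩
  refine ⟨List.replicate m b, ?_⟩
  rw [show m + 2 = 1 + (1 + m) by omega, List.replicate_add, List.replicate_add]
  simp

lemma flatRuns_head {b : Sym α} {k : ℕ} {rest : List (Sym α × ℕ)} (hk : 1 ≤ k) :
    (flatRuns ((b,k) :: rest)).head? = some b := by
  rw [flatRuns_cons]
  obtain ⟨m, rfl⟩ : ∃ m, k = m + 1 := ⟨k - 1, by omega⟩
  rw [List.replicate_succ]
  simp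

lemma runs_replicate_append {b : Sym α} {w : List (Sym α)} :
    ∀ {k : ℕ}, 1 ≤ k → (∀ c ∈ w.head?, c ≠ b) →
      runs (List.replicate k b ++ w) = (b,k) :: runs w := by
  intro k
  induction k with
  | zero => omega
  | succ k ih =>
    intro _ hw
    rcases Nat.eq_zero_or_pos k with hk0 | hk2
    · subst hk0
      rw [List.replicate_succ, List.replicate_zero, List.cons_append, List.nil_append]
      rcases hrw : runs w with _ | ⟨⟨c,k'⟩, rest⟩
      · have : w = [] := runs_eq_nil.mp hrw
        subst this
        rw [runs_cons_nil runs_nil]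
      · have hcw : w.head? = some c := by
          have hir := runs_isRuns w
          rw [hrw] at hir
          have := hir.flat
          rw [this, flatRuns_head (hir.pos (c,k') (by simp))]
        have hcb : c ≠ b := hw c hcw
        rw [runs_cons_cons hrw, if_neg (fun hh => hcb hh.symm)]
    · rw [List.replicate_succ, List.cons_append, runs_cons_cons (ih hk2 hw), if_pos rfl]

lemma runs_flatRuns {rl : List (Sym α × ℕ)} (hpos : ∀ p ∈ rl, 1 ≤ p.2)
    (hchain : rl.Chain' fun p q => p.1 ≠ q.1) : runs (flatRuns rl) = rl := by
  induction rl with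
  | nil => exact runs_nil
  | cons p rest ih =>
    obtain ⟨b, k⟩ := p
    rw [flatRuns_cons]
    have hk : 1 ≤ k := hpos (b,k) (by simp)
    have hw : ∀ c ∈ (flatRuns rest).head?, c ≠ b := by
      intro c hc
      rcases rest with _ | ⟨⟨c', k'⟩, rest'⟩
      · simp [flatRuns_nil] at hc
      · rw [flatRuns_head (hpos (c',k') (by simp))] at hc
        have := (List.isChain_cons_cons.mp hchain).1
        simp only [Option.mem_def, Option.some.injEq] at hc
        subst hc
        exact fun hh => this hh.symm
    rw [runs_replicate_append hk hw,
      ih (fun q hq => hpos q (List.mem_cons_of_mem _ hq)) (List.IsChain.tail hchain)]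

lemma isRuns_rle_eq {v : List (Sym α)} {rl : List (Sym α × ℕ)}
    (hpos : ∀ p ∈ rl, 1 ≤ p.2) (hchain : rl.Chain' fun p q => p.1 ≠ q.1)
    (hflat : v = flatRuns rl) : rle v = rl.map image := by
  rw [rle_eq_map, hflat, runs_flatRuns hpos hchain]

/-- occurrence analysis for rle -/
lemma rle_occ {S : Sym α} {v : List (Sym α)} (hS : S ∈ rle v) :
    ∃ b k, 1 ≤ k ∧ S = image (b,k) ∧ List.replicate k b <:+: v := by
  rw [rle_eq_map] at hS
  obtain ⟨p, hp, himg⟩ := List.mem_map.mp hS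
  obtain ⟨s, t, hst⟩ := List.append_of_mem hp
  have hir := runs_isRuns v
  refine ⟨p.1, p.2, hir.pos p hp, himg.symm, ?_⟩
  have : flatRuns (p :: t) <:+: v := isRuns_infix hir hst
  exact List.IsInfix.trans (by rw [flatRuns_cons]; exact ⟨[], flatRuns t, by simp⟩) this

/-- adjacency analysis for rle -/
lemma rle_adj {X Y : Sym α} {v : List (Sym α)} (hXY : [X,Y] <:+: rle v) :
    ∃ b k b' k', 1 ≤ k ∧ 1 ≤ k' ∧ b ≠ b' ∧ X = image (b,k) ∧ Y = image (b',k') ∧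
      List.replicate k b ++ List.replicate k' b' <:+: v := by
  obtain ⟨s, t, hst⟩ := hXY
  rw [rle_eq_map] at hst
  have hst' : (runs v).map image = s ++ X :: (Y :: t) := by rw [← hst]; simp
  obtain ⟨L₁, p, L₂, h1, h2, h3, h4⟩ := map_eq_append_cons hst'
  have h4x : L₂.map image = [] ++ Y :: t := by simpa using h4
  obtain ⟨L₂', q, L₃, h1', h2', h3', h4'⟩ := map_eq_append_cons h4x
  have hL₂ : L₂' = [] := by
    cases L₂' with
    | nil => rfl
    | cons z zs => simp at h2'
  subst hL₂
  simp only [List.nil_append] at h1'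
  subst h1'
  have hir := runs_isRuns v
  have hrv : runs v = L₁ ++ p :: q :: L₃ := h1
  refine ⟨p.1, p.2, q.1, q.2, hir.pos p (by rw [hrv]; simp), hir.pos q (by rw [hrv]; simp),
    isRuns_ext hir hrv, h3.symm, h3'.symm, ?_⟩
  have : flatRuns (p :: q :: L₃) <:+: v := isRuns_infix hir hrv
  refine List.IsInfix.trans ?_ this
  rw [flatRuns_cons, flatRuns_cons]
  exact ⟨[], flatRuns L₃, by simp⟩

/-- pullback of a prefix of the form `a ++ [S]` through rle -/
lemma rle_prefix_snoc {v a : List (Sym α)} {S : Sym α} (hp : a ++ [S] <+: rle v) :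
    ∃ u b k r, v = u ++ List.replicate k b ++ r ∧ rle u = a ∧ 1 ≤ k ∧ S = image (b,k) ∧
      u.getLast? ≠ some b ∧ (∀ c ∈ r.head?, c ≠ b) := by
  obtain ⟨t, hst⟩ := hp
  rw [rle_eq_map] at hst
  have hst' : (runs v).map image = a ++ S :: t := by rw [← hst]; simp
  obtain ⟨L₁, p, L₂, h1, h2, h3, h4⟩ := map_eq_append_cons hst'
  have hir := runs_isRuns v
  have hpos₁ : ∀ q ∈ L₁, 1 ≤ q.2 := fun q hq => hir.pos q (by rw [h1]; simp [hq])
  have hch : (L₁ ++ p :: L₂).Chain' fun p q => p.1 ≠ q.1 := by rw [← h1]; exact hir.chain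
  have hch₁ : L₁.Chain' fun p q => p.1 ≠ q.1 := (List.isChain_append.mp hch).1
  refine ⟨flatRuns L₁, p.1, p.2, flatRuns L₂, ?_, ?_,
    hir.pos p (by rw [h1]; simp), h3.symm, ?_, ?_⟩
  · rw [hir.flat, h1, flatRuns_append, flatRuns_cons]; simp
  · rw [isRuns_rle_eq hpos₁ hch₁ rfl, h2]
  · -- getLast? (flatRuns L₁) ≠ some p.1
    rcases hL : L₁.getLast? with _ | q
    · have : L₁ = [] := by
        cases L₁ with
        | nil => rfl
        | cons z zs => simp [List.getLast?_concat, List.getLast?_cons] at hL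
      subst this
      simp [flatRuns_nil]
    · obtain ⟨L₁', rfl⟩ := List.getLast?_eq_some_iff.mp hL
      have hq1 : q.1 ≠ p.1 := by
        have := (List.isChain_append.mp hch).2.2
        exact this q (by simp [List.getLast?_concat]) p (by simp)
      have hkq : 1 ≤ q.2 := hpos₁ q (by simp)
      rw [flatRuns_append, flatRuns_cons, flatRuns_nil]
      obtain ⟨m, hm⟩ : ∃ m, q.2 = m + 1 := ⟨q.2 - 1, by omega⟩
      rw [hm, List.replicate_add, List.replicate_one]
      rw [List.append_nil, ← List.append_assoc]
      rw [List.getLast?_concat]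
      exact fun hh => hq1 (by injection hh)
  · intro c hc
    rcases L₂ with _ | ⟨⟨c', k'⟩, rest'⟩
    · simp [flatRuns_nil] at hc
    · rw [flatRuns_head (hir.pos (c',k') (by rw [h1]; simp))] at hc
      have : p.1 ≠ c' := by
        have := (List.isChain_append.mp hch).2.1
        exact (List.isChain_cons_cons.mp this).1
      simp only [Option.mem_def, Option.some.injEq] at hc
      subst hc
      exact fun hh => this hh.symm

/-- injectivity of rle given no run/pow ambiguity -/
lemma rle_inj_aux {vx vy : List (Sym α)}
    (hamb : ∀ b (k : ℕ), 2 ≤ k → (Sym.pow b k ∈ vx ∨ Sym.pow b k ∈ vy) →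
      ([b,b] <:+: vx ∨ [b,b] <:+: vy) → False) :
    ∀ (rlx rly : List (Sym α × ℕ)),
      (∀ p ∈ rlx, 1 ≤ p.2 ∧ List.replicate p.2 p.1 <:+: vx) →
      (∀ p ∈ rly, 1 ≤ p.2 ∧ List.replicate p.2 p.1 <:+: vy) →
      rlx.map image = rly.map image → rlx = rly := by
  intro rlx
  induction rlx with
  | nil =>
    intro rly _ _ hmap
    cases rly with
    | nil => rfl
    | cons q t => simp at hmap
  | cons p rlx' ih =>
    intro rly hx hy hmap
    cases rly with
    | nil => simp at hmap
    | cons q rly' =>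
      simp only [List.map_cons, List.cons.injEq] at hmap
      have hpx := hx p (by simp)
      have hqy := hy q (by simp)
      have hpq : p = q := by
        obtain ⟨b, k⟩ := p
        obtain ⟨b', k'⟩ := q
        rcases image_eq_cases hpx.1 hqy.1 hmap.1 with ⟨rfl, rfl⟩ | ⟨hk1, hk2, hbb⟩ | ⟨hk1, hk2, hbb⟩
        · rfl
        · exfalso
          refine hamb b' k' hk2 (Or.inl ?_) (Or.inr ?_)
          · have : b ∈ vx := by
              have := hpx.2
              rw [hk1, List.replicate_one] at this
              exact this.mem (by simp)
            rwa [hbb] at this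
          · exact List.IsPrefix.isInfix (replicate_two_prefix hk2) |>.trans hqy.2
        · exfalso
          refine hamb b k hk2 (Or.inr ?_) (Or.inl ?_)
          · have : b' ∈ vy := by
              have := hqy.2
              rw [hk1, List.replicate_one] at this
              exact this.mem (by simp)
            rwa [hbb] at this
          · exact List.IsPrefix.isInfix (replicate_two_prefix hk2) |>.trans hpx.2
      rw [hpq, ih rly' (fun r hr => hx r (by simp [hr])) (fun r hr => hy r (by simp [hr])) hmap.2]

lemma rle_inj {vx vy x y : List (Sym α)} (hx : x <:+: vx) (hy : y <:+: vy)
    (hamb : ∀ b (k : ℕ), 2 ≤ k → (Sym.pow b k ∈ vx ∨ Sym.pow b k ∈ vy) →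
      ([b,b] <:+: vx ∨ [b,b] <:+: vy) → False)
    (heq : rle x = rle y) : x = y := by
  have hirx := runs_isRuns x
  have hiry := runs_isRuns y
  have hruns : runs x = runs y := by
    refine rle_inj_aux hamb (runs x) (runs y) ?_ ?_ ?_
    · intro p hp
      exact ⟨hirx.pos p hp, by
        obtain ⟨s, t, hst⟩ := List.append_of_mem hp
        have := isRuns_infix hirx hst
        exact (List.IsInfix.trans (by rw [flatRuns_cons]; exact ⟨[], flatRuns t, by simp⟩) this).trans hx⟩
    · intro p hp
      exact ⟨hiry.pos p hp, by
        obtain ⟨s, t, hst⟩ := List.append_of_mem hp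
        have := isRuns_infix hiry hst
        exact (List.IsInfix.trans (by rw [flatRuns_cons]; exact ⟨[], flatRuns t, by simp⟩) this).trans hy⟩
    · rw [← rle_eq_map, ← rle_eq_map, heq]
  rw [hirx.flat, hiry.flat, hruns]

end Dev2
end DynStr
namespace DynStr
section Dev3
set_option linter.unusedSectionVars false
set_option linter.unusedVariables false
variable {α : Type} [DecidableEq α] {g : Sym α → Bool}

lemma compress_nil : compress g [] = [] := rfl
lemma compress_one (a : Sym α) : compress g [a] = [a] := rfl

lemma compress_cons_pair {a b : Sym α} (l : List (Sym α))
    (hp : g a = false ∧ g b = true) :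
    compress g (a :: b :: l) = Sym.pair a b :: compress g l := by
  rw [compress, if_pos hp]

lemma compress_cons_neg {a b : Sym α} (l : List (Sym α))
    (hp : ¬(g a = false ∧ g b = true)) :
    compress g (a :: b :: l) = a :: compress g (b :: l) := by
  rw [compress, if_neg hp]

lemma compress_cons_ok {a : Sym α} {u : List (Sym α)}
    (hcond : ∀ c ∈ u.head?, ¬(g a = false ∧ g c = true)) :
    compress g (a :: u) = a :: compress g u := by
  cases u with
  | nil => rfl
  | cons c u' => exact compress_cons_neg u' (hcond c rfl)

lemma compress_eq_nil {v : List (Sym α)} : compress g v = [] ↔ v = [] := by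
  constructor
  · intro hc
    match v with
    | [] => rfl
    | [a] => simp [compress_one] at hc
    | a :: b :: l =>
      by_cases hp : g a = false ∧ g b = true
      · rw [compress_cons_pair l hp] at hc; simp at hc
      · rw [compress_cons_neg l hp] at hc; simp at hc
  · rintro rfl; rfl

lemma rle_eq_nil {v : List (Sym α)} : rle v = [] ↔ v = [] := by
  rw [rle_eq_map]
  simp [runs_eq_nil]

/-- occurrence analysis for compress -/
lemma compress_occ {S : Sym α} : ∀ {v : List (Sym α)}, S ∈ compress g v →
    S ∈ v ∨ ∃ c d, S = Sym.pair c d ∧ g c = false ∧ g d = true ∧ [c,d] <:+: v := by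
  intro v
  induction v using compress.induct g with
  | case1 => intro hS; simp [compress_nil] at hS
  | case2 a => intro hS; rw [compress_one] at hS; simp at hS; simp [hS]
  | case3 a b l hp ih =>
    intro hS
    rw [compress_cons_pair l hp] at hS
    rcases List.mem_cons.mp hS with rfl | hS
    · exact Or.inr ⟨a, b, rfl, hp.1, hp.2, ⟨[], l, rfl⟩⟩
    · rcases ih hS with hv | ⟨c, d, h1, h2, h3, h4⟩
      · exact Or.inl (by simp [hv])
      · exact Or.inr ⟨c, d, h1, h2, h3, h4.trans ⟨[a,b], [], by simp⟩⟩
  | case4 a b l hp ih =>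
    intro hS
    rw [compress_cons_neg l hp] at hS
    rcases List.mem_cons.mp hS with rfl | hS
    · exact Or.inl (by simp)
    · rcases ih hS with hv | ⟨c, d, h1, h2, h3, h4⟩
      · exact Or.inl (by simp [hv])
      · exact Or.inr ⟨c, d, h1, h2, h3, h4.trans ⟨[a], [], by simp⟩⟩

lemma compress_head {v : List (Sym α)} {T : Sym α} {t : List (Sym α)}
    (he : compress g v = T :: t) :
    (∃ v', v = T :: v') ∨
      ∃ x y v', v = x :: y :: v' ∧ T = Sym.pair x y ∧ g x = false ∧ g y = true := by
  match v with
  | [] => simp [compress_nil] at he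
  | [a] =>
    rw [compress_one] at he
    exact Or.inl ⟨[], by simp_all⟩
  | a :: b :: l =>
    by_cases hp : g a = false ∧ g b = true
    · rw [compress_cons_pair l hp] at he
      have hT : Sym.pair a b = T := by injection he
      exact Or.inr ⟨a, b, l, rfl, hT.symm, hp.1, hp.2⟩
    · rw [compress_cons_neg l hp] at he
      have ha : a = T := by injection he
      exact Or.inl ⟨b :: l, by rw [ha]⟩

lemma infix_pair_cons {S T P : Sym α} {w : List (Sym α)} (hi : [S,T] <:+: (P :: w)) :
    (S = P ∧ ∃ t', w = T :: t') ∨ [S,T] <:+: w := by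
  obtain ⟨s, t, hst⟩ := hi
  cases s with
  | nil =>
    simp only [List.nil_append, List.cons_append, List.cons.injEq] at hst
    exact Or.inl ⟨hst.1, t, hst.2.symm⟩
  | cons z s' =>
    simp only [List.cons_append, List.cons.injEq] at hst
    exact Or.inr ⟨s', t, hst.2⟩

/-- adjacency analysis for compress -/
lemma compress_adj {S T : Sym α} : ∀ {v : List (Sym α)}, [S,T] <:+: compress g v →
    (∃ s t, v = s ++ S :: T :: t ∧ ¬(g S = false ∧ g T = true)) ∨
    (∃ x y, T = Sym.pair x y ∧ g x = false ∧ g y = true ∧ [S,x,y] <:+: v) ∨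
    (∃ c d, S = Sym.pair c d ∧ g c = false ∧ g d = true ∧ [c,d,T] <:+: v) ∨
    (∃ c d x y, S = Sym.pair c d ∧ T = Sym.pair x y ∧ g c = false ∧ g d = true ∧
      g x = false ∧ g y = true ∧ [c,d,x,y] <:+: v) := by
  intro v
  induction v using compress.induct g with
  | case1 => intro hi; rw [compress_nil] at hi; exact absurd (List.IsInfix.length_le hi) (by simp)
  | case2 a => intro hi; rw [compress_one] at hi; exact absurd (List.IsInfix.length_le hi) (by simp)
  | case3 a b l hp ih =>
    intro hi
    rw [compress_cons_pair l hp] at hi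
    rcases infix_pair_cons hi with ⟨rfl, t', ht'⟩ | hi'
    · -- S = pair a b, T = head of compress l
      rcases compress_head ht' with ⟨v', rfl⟩ | ⟨x, y, v', rfl, hT, hgx, hgy⟩
      · exact Or.inr (Or.inr (Or.inl ⟨a, b, rfl, hp.1, hp.2, ⟨[], v', by simp⟩⟩))
      · exact Or.inr (Or.inr (Or.inr ⟨a, b, x, y, rfl, hT, hp.1, hp.2, hgx, hgy,
          ⟨[], v', by simp⟩⟩))
    · rcases ih hi' with ⟨s, t, hst, hnp⟩ | ⟨x, y, h1, h2, h3, h4⟩ |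
        ⟨c, d, h1, h2, h3, h4⟩ | ⟨c, d, x, y, h1, h2, h3, h4, h5, h6, h7⟩
      · exact Or.inl ⟨a :: b :: s, t, by rw [hst]; rfl, hnp⟩
      · exact Or.inr (Or.inl ⟨x, y, h1, h2, h3, h4.trans ⟨[a,b], [], by simp⟩⟩)
      · exact Or.inr (Or.inr (Or.inl ⟨c, d, h1, h2, h3, h4.trans ⟨[a,b], [], by simp⟩⟩))
      · exact Or.inr (Or.inr (Or.inr ⟨c, d, x, y, h1, h2, h3, h4, h5, h6,
          h7.trans ⟨[a,b], [], by simp⟩⟩))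
  | case4 a b l hp ih =>
    intro hi
    rw [compress_cons_neg l hp] at hi
    rcases infix_pair_cons hi with ⟨rfl, t', ht'⟩ | hi'
    · rcases compress_head ht' with ⟨v', hv'⟩ | ⟨x, y, v', hv', hT, hgx, hgy⟩
      · -- b :: l = T :: v'
        have hb : b = T := by injection hv'
        have hl : l = v' := by injection hv'
        refine Or.inl ⟨[], l, by simp [hb], ?_⟩
        rw [← hb]; exact hp
      · have hb : b = x := by injection hv'
        have hl : l = y :: v' := by injection hv'
        refine Or.inr (Or.inl ⟨x, y, hT, hgx, hgy, ⟨[], v', by rw [hl, hb]; simp⟩⟩)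
    · rcases ih hi' with ⟨s, t, hst, hnp⟩ | ⟨x, y, h1, h2, h3, h4⟩ |
        ⟨c, d, h1, h2, h3, h4⟩ | ⟨c, d, x, y, h1, h2, h3, h4, h5, h6, h7⟩
      · exact Or.inl ⟨a :: s, t, by rw [hst]; rfl, hnp⟩
      · exact Or.inr (Or.inl ⟨x, y, h1, h2, h3, h4.trans ⟨[a], [], by simp⟩⟩)
      · exact Or.inr (Or.inr (Or.inl ⟨c, d, h1, h2, h3, h4.trans ⟨[a], [], by simp⟩⟩))
      · exact Or.inr (Or.inr (Or.inr ⟨c, d, x, y, h1, h2, h3, h4, h5, h6,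
          h7.trans ⟨[a], [], by simp⟩⟩))

/-- pullback of a prefix of the form `a ++ [S]` through compress -/
lemma compress_prefix_snoc {S : Sym α} : ∀ {v a : List (Sym α)},
    a ++ [S] <+: compress g v →
    (∃ u r, v = u ++ [S] ++ r ∧ compress g u = a ∧
      (∀ c ∈ r.head?, ¬(g S = false ∧ g c = true))) ∨
    (∃ u x y r, v = u ++ [x,y] ++ r ∧ compress g u = a ∧ S = Sym.pair x y ∧
      g x = false ∧ g y = true) := by
  intro v
  induction v using compress.induct g with
  | case1 =>
    intro a hp; rw [compress_nil] at hp
    have := hp.length_le; simp at this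
  | case2 a₀ =>
    intro a hp
    rw [compress_one] at hp
    have hlen : a.length + 1 ≤ 1 := by simpa using hp.length_le
    have ha : a = [] := by
      cases a with
      | nil => rfl
      | cons z zs => simp at hlen
    subst ha
    have hS : S = a₀ := by
      have := hp.eq_of_length (by simp)
      simpa using this
    subst hS
    exact Or.inl ⟨[], [], by simp, rfl, by simp⟩
  | case3 a₀ b l hpat ih =>
    intro a hp
    rw [compress_cons_pair l hpat] at hp
    cases a with
    | nil =>
      have hS : S = Sym.pair a₀ b := by
        rcases hp with ⟨t, ht⟩
        simpa using congrArg List.head? ht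
      exact Or.inr ⟨[], a₀, b, l, by simp, rfl, hS, hpat.1, hpat.2⟩
    | cons P a' =>
      have hP : P = Sym.pair a₀ b := by
        rcases hp with ⟨t, ht⟩
        have := congrArg List.head? ht
        simpa using this
      have hp' : a' ++ [S] <+: compress g l := by
        rcases hp with ⟨t, ht⟩
        refine ⟨t, ?_⟩
        have := congrArg List.tail ht
        simpa using this
      rcases ih hp' with ⟨u, r, h1, h2, h3⟩ | ⟨u, x, y, r, h1, h2, h3, h4, h5⟩
      · refine Or.inl ⟨a₀ :: b :: u, r, by rw [h1]; rfl, ?_, h3⟩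
        rw [compress_cons_pair u hpat, h2, hP]
      · refine Or.inr ⟨a₀ :: b :: u, x, y, r, by rw [h1]; rfl, ?_, h3, h4, h5⟩
        rw [compress_cons_pair u hpat, h2, hP]
  | case4 a₀ b l hpat ih =>
    intro a hp
    rw [compress_cons_neg l hpat] at hp
    cases a with
    | nil =>
      have hS : S = a₀ := by
        rcases hp with ⟨t, ht⟩
        simpa using congrArg List.head? ht
      subst hS
      exact Or.inl ⟨[], b :: l, by simp, rfl, fun c hc => by
        simp only [List.head?_cons, Option.mem_def, Option.some.injEq] at hc
        subst hc; exact hpat⟩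
    | cons P a' =>
      have hP : P = a₀ := by
        rcases hp with ⟨t, ht⟩
        have := congrArg List.head? ht
        simpa using this
      subst hP
      have hp' : a' ++ [S] <+: compress g (b :: l) := by
        rcases hp with ⟨t, ht⟩
        refine ⟨t, ?_⟩
        have := congrArg List.tail ht
        simpa using this
      rcases ih hp' with ⟨u, r, h1, h2, h3⟩ | ⟨u, x, y, r, h1, h2, h3, h4, h5⟩
      · refine Or.inl ⟨P :: u, r, by rw [h1]; rfl, ?_, h3⟩
        have hcond : ∀ c ∈ u.head?, ¬(g P = false ∧ g c = true) := by
          intro c hc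
          cases u with
          | nil => simp at hc
          | cons z zs =>
            have hz : z = b := by
              have := congrArg List.head? h1
              simpa using this.symm
            simp only [List.head?_cons, Option.mem_def, Option.some.injEq] at hc
            subst hc; rw [hz]; exact hpat
        rw [compress_cons_ok hcond, h2]
      · refine Or.inr ⟨P :: u, x, y, r, by rw [h1]; rfl, ?_, h3, h4, h5⟩
        have hcond : ∀ c ∈ u.head?, ¬(g P = false ∧ g c = true) := by
          intro c hc
          cases u with
          | nil => simp at hc
          | cons z zs =>
            have hz : z = b := by
              have := congrArg List.head? h1
              simpa using this.symm
            simp only [List.head?_cons, Option.mem_def, Option.some.injEq] at hc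
            subst hc; rw [hz]; exact hpat
        rw [compress_cons_ok hcond, h2]

/-- injectivity of compress given no pair ambiguity -/
lemma compress_inj {vx vy : List (Sym α)}
    (hamb : ∀ c d, g c = false → g d = true →
      (Sym.pair c d ∈ vx ∨ Sym.pair c d ∈ vy) →
      ([c,d] <:+: vx ∨ [c,d] <:+: vy) → False) :
    ∀ {x y : List (Sym α)}, x <:+: vx → y <:+: vy →
      compress g x = compress g y → x = y := by
  intro x
  induction x using compress.induct g with
  | case1 =>
    intro y _ _ heq
    rw [compress_nil] at heq
    exact (compress_eq_nil.mp heq.symm).symm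
  | case2 a =>
    intro y hx hy heq
    rw [compress_one] at heq
    match y, heq with
    | [], heq => simp [compress_nil] at heq
    | [e], heq => exact heq
    | e :: f :: m, heq =>
      by_cases hpat : g e = false ∧ g f = true
      · rw [compress_cons_pair m hpat] at heq
        exfalso
        have h1 : a = Sym.pair e f := by
          have := congrArg List.head? heq
          simpa using this
        refine hamb e f hpat.1 hpat.2 (Or.inl ?_) (Or.inr ?_)
        · rw [← h1]; exact hx.mem (by simp)
        · exact List.IsInfix.trans ⟨[], m, by simp⟩ hy
      · rw [compress_cons_neg m hpat] at heq
        injection heq with h1 h2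
        exact absurd h2.symm (by simp [compress_eq_nil])
  | case3 a b l hpat ih =>
    intro y hx hy heq
    rw [compress_cons_pair l hpat] at heq
    match y, heq with
    | [], heq => simp [compress_nil] at heq
    | [e], heq =>
      rw [compress_one] at heq
      injection heq with h1 h2
      exfalso
      refine hamb a b hpat.1 hpat.2 (Or.inr ?_) (Or.inl ?_)
      · rw [h1]; exact hy.mem (by simp)
      · exact List.IsInfix.trans ⟨[], l, by simp⟩ hx
    | e :: f :: m, heq =>
      by_cases hpat' : g e = false ∧ g f = true
      · rw [compress_cons_pair m hpat'] at heq
        injection heq with h1 h2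
        obtain ⟨rfl, rfl⟩ : a = e ∧ b = f := by
          injection h1 with h1a h1b; exact ⟨h1a, h1b⟩
        rw [ih (List.IsInfix.trans ⟨[a,b], [], by simp⟩ hx)
          (List.IsInfix.trans ⟨[a,b], [], by simp⟩ hy) h2]
      · rw [compress_cons_neg m hpat'] at heq
        injection heq with h1 h2
        exfalso
        refine hamb a b hpat.1 hpat.2 (Or.inr ?_) (Or.inl ?_)
        · rw [h1]; exact hy.mem (by simp)
        · exact List.IsInfix.trans ⟨[], l, by simp⟩ hx
  | case4 a b l hpat ih =>
    intro y hx hy heq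
    rw [compress_cons_neg l hpat] at heq
    match y, heq with
    | [], heq => simp [compress_nil] at heq
    | [e], heq =>
      rw [compress_one] at heq
      injection heq with h1 h2
      exact absurd h2 (by simp [compress_eq_nil])
    | e :: f :: m, heq =>
      by_cases hpat' : g e = false ∧ g f = true
      · rw [compress_cons_pair m hpat'] at heq
        injection heq with h1 h2
        exfalso
        refine hamb e f hpat'.1 hpat'.2 (Or.inl ?_) (Or.inr ?_)
        · rw [← h1]; exact hx.mem (by simp)
        · exact List.IsInfix.trans ⟨[], m, by simp⟩ hy
      · rw [compress_cons_neg m hpat'] at heq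
        injection heq with h1 h2
        obtain rfl : a = e := h1
        rw [ih (List.IsInfix.trans ⟨[a], [], by simp⟩ hx)
          (List.IsInfix.trans ⟨[a], [], by simp⟩ hy) h2]

end Dev3
end DynStr
namespace DynStr
section Dev4
set_option linter.unusedSectionVars false
set_option linter.unusedVariables false
variable {α : Type} [DecidableEq α] (h : ℕ → Sym α → Bool)

/-- `v` is a genuine level-`l` string. -/
def Gen (l : ℕ) (v : List (Sym α)) : Prop := ∃ w : List α, v = shrinkIter h l (embed w)

/-- `S` occurs at level `l`. -/
def OccL (l : ℕ) (S : Sym α) : Prop := ∃ v, Gen h l v ∧ S ∈ v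

/-- `S T` are adjacent at level `l`. -/
def AdjL (l : ℕ) (S T : Sym α) : Prop := ∃ v, Gen h l v ∧ [S,T] <:+: v

lemma shrinkIter_succ (i : ℕ) (w : List (Sym α)) :
    shrinkIter h (i+1) w = shrinkStep h (i+1) (shrinkIter h i w) := rfl

lemma shrinkStep_odd {i : ℕ} (hi : i % 2 = 1) (w : List (Sym α)) :
    shrinkStep h i w = rle w := if_pos hi

lemma shrinkStep_even {i : ℕ} (hi : i % 2 = 0) (w : List (Sym α)) :
    shrinkStep h i w = compress (h (i/2)) w := if_neg (by omega)

lemma gen_succ {l : ℕ} {v : List (Sym α)} (hg : Gen h (l+1) v) :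
    ∃ v', Gen h l v' ∧ v = shrinkStep h (l+1) v' := by
  obtain ⟨w, hw⟩ := hg
  exact ⟨shrinkIter h l (embed w), ⟨w, rfl⟩, hw⟩

lemma gen_zero_base {v : List (Sym α)} (hg : Gen h 0 v) {S : Sym α} (hS : S ∈ v) :
    ∃ a, S = Sym.base a := by
  obtain ⟨w, hw⟩ := hg
  have : v = embed w := hw
  subst this
  obtain ⟨a, _, rfl⟩ := List.mem_map.mp hS
  exact ⟨a, rfl⟩

lemma symLevel_base (a : α) : symLevel h (Sym.base a) = 0 := rfl
lemma symLevel_pow (s : Sym α) (k : ℕ) :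
    symLevel h (Sym.pow s k) = symLevel h s + 1 := rfl
lemma symLevel_pair (s t : Sym α) :
    symLevel h (Sym.pair s t) =
      sInf {l | l % 2 = 0 ∧ max (symLevel h s) (symLevel h t) < l ∧
                h (l / 2) s = false ∧ h (l / 2) t = true} := rfl

lemma adjL_occL {l : ℕ} {S T : Sym α} (ha : AdjL h l S T) : OccL h l S ∧ OccL h l T := by
  obtain ⟨v, hg, hi⟩ := ha
  exact ⟨⟨v, hg, hi.mem (by simp)⟩, ⟨v, hg, hi.mem (by simp)⟩⟩

/-- the three invariants -/
def O1P (l : ℕ) : Prop := ∀ S : Sym α, OccL h l S → symLevel h S ≤ l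
def O3P (l : ℕ) : Prop := ∀ S : Sym α, AdjL h l S S → l % 2 = 0 ∧ symLevel h S = l
def DDP (l : ℕ) : Prop := ∀ (X Y : Sym α) (l' : ℕ), AdjL h l X Y → l' % 2 = 0 → l' ≤ l →
    h (l'/2) X = false → h (l'/2) Y = true →
    symLevel h X < l' → symLevel h Y < l' → False

/-- freshly created pairs have level exactly the creation step -/
lemma o4pair {l : ℕ} (ho1 : O1P h l) (hdd : DDP h l) {c d : Sym α}
    (hadj : AdjL h l c d) (hpar : (l+1) % 2 = 0)
    (hc : h ((l+1)/2) c = false) (hd : h ((l+1)/2) d = true) :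
    symLevel h (Sym.pair c d) = l + 1 := by
  rw [symLevel_pair]
  set T : Set ℕ := {lv | lv % 2 = 0 ∧ max (symLevel h c) (symLevel h d) < lv ∧
      h (lv / 2) c = false ∧ h (lv / 2) d = true} with hT
  have hlevc : symLevel h c ≤ l := ho1 c (adjL_occL h hadj).1
  have hlevd : symLevel h d ≤ l := ho1 d (adjL_occL h hadj).2
  have hmem : l + 1 ∈ T := ⟨hpar, by simp; omega, hc, hd⟩
  have hne : T.Nonempty := ⟨l+1, hmem⟩
  have hinf := Nat.sInf_mem hne
  have hle : sInf T ≤ l + 1 := Nat.sInf_le hmem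
  rcases Nat.lt_or_ge (sInf T) (l+1) with hlt | hge
  · exfalso
    obtain ⟨h1, h2, h3, h4⟩ := hinf
    exact hdd c d (sInf T) hadj h1 (by omega) h3 h4
      (by simp at h2; omega) (by simp at h2; omega)
  · omega

/-- the main mutual induction -/
lemma levels_machinery : ∀ l : ℕ, O1P h l ∧ O3P h l ∧ DDP h l := by
  intro l
  induction l with
  | zero =>
    refine ⟨?_, ?_, ?_⟩
    · intro S ⟨v, hg, hS⟩
      obtain ⟨a, rfl⟩ := gen_zero_base h hg hS
      rw [symLevel_base]
    · intro S ⟨v, hg, hS⟩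
      obtain ⟨a, rfl⟩ := gen_zero_base h hg (hS.mem List.mem_cons_self)
      rw [symLevel_base]
      exact ⟨rfl, rfl⟩
    · intro X Y l' _ _ hl' _ _ hX _
      omega
  | succ l ih =>
    obtain ⟨ho1, ho3, hdd⟩ := ih
    by_cases hpar : (l+1) % 2 = 1
    · -- rle step
      have hstep : ∀ v : List (Sym α), Gen h (l+1) v → ∃ v', Gen h l v' ∧ v = rle v' := by
        intro v hg
        obtain ⟨v', hg', hv⟩ := gen_succ h hg
        exact ⟨v', hg', by rw [hv, shrinkStep_odd h hpar]⟩
      refine ⟨?_, ?_, ?_⟩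
      · intro S ⟨v, hg, hS⟩
        obtain ⟨v', hg', rfl⟩ := hstep v hg
        obtain ⟨b, k, hk, rfl, hinf⟩ := rle_occ hS
        rcases Nat.lt_or_ge k 2 with hk2 | hk2
        · have hk1 : k = 1 := by omega
          subst hk1
          rw [image_fst_of_one]
          have hbv : b ∈ v' := hinf.mem (by simp)
          exact le_trans (ho1 b ⟨v', hg', hbv⟩) (by omega)
        · have hbb : [b,b] <:+: v' := ((replicate_two_prefix hk2).isInfix).trans hinf
          have := ho3 b ⟨v', hg', hbb⟩
          simp only [image, if_pos hk2]
          rw [symLevel_pow, this.2]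
      · intro S ⟨v, hg, hSS⟩
        obtain ⟨v', hg', rfl⟩ := hstep v hg
        obtain ⟨b, k, b', k', hk, hk', hbb', hS1, hS2, hinf⟩ := rle_adj hSS
        exfalso
        rcases image_eq_cases hk hk' (hS1.symm.trans hS2) with ⟨rfl, rfl⟩ | ⟨hk1, hk2, hbe⟩ |
          ⟨hk1, hk2, hbe⟩
        · exact hbb' rfl
        · -- k = 1, b = pow b' k'
          have hSb : S = b := by rw [hS1, hk1, image_fst_of_one]
          have hbv : b ∈ v' := by
            refine hinf.mem ?_
            rw [hk1]
            simp
          have hlev1 : symLevel h S ≤ l := ho1 S ⟨v', hg', hSb ▸ hbv⟩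
          have hb'b' : [b',b'] <:+: v' := by
            refine ((replicate_two_prefix hk2).isInfix).trans (List.IsInfix.trans ?_ hinf)
            exact ⟨List.replicate k b, [], by simp⟩
          have hlev2 := ho3 b' ⟨v', hg', hb'b'⟩
          rw [hSb, hbe, symLevel_pow, hlev2.2] at hlev1
          omega
        · -- k' = 1, b' = pow b k
          have hSb : S = b' := by rw [hS2, hk1, image_fst_of_one]
          have hbv : b' ∈ v' := by
            refine hinf.mem ?_
            rw [hk1]
            simp
          have hlev1 : symLevel h S ≤ l := ho1 S ⟨v', hg', hSb ▸ hbv⟩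
          have hbb : [b,b] <:+: v' := by
            refine ((replicate_two_prefix hk2).isInfix).trans (List.IsInfix.trans ?_ hinf)
            exact ⟨[], List.replicate k' b', by simp⟩
          have hlev2 := ho3 b ⟨v', hg', hbb⟩
          rw [hSb, hbe, symLevel_pow, hlev2.2] at hlev1
          omega
      · intro X Y l' ⟨v, hg, hXY⟩ hl'par hl'le hfX hfY hlevX hlevY
        obtain ⟨v', hg', rfl⟩ := hstep v hg
        obtain ⟨b, k, b', k', hk, hk', hbb', hS1, hS2, hinf⟩ := rle_adj hXY
        rcases Nat.lt_or_ge k 2 with hk2 | hk2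
        · rcases Nat.lt_or_ge k' 2 with hk2' | hk2'
          · -- both singletons
            have hXb : X = b := by rw [hS1, show k = 1 by omega, image_fst_of_one]
            have hYb : Y = b' := by rw [hS2, show k' = 1 by omega, image_fst_of_one]
            have hXYinf : [X,Y] <:+: v' := by
              rw [hXb, hYb]
              refine List.IsInfix.trans ?_ hinf
              rw [show k = 1 by omega, show k' = 1 by omega]
              simp
            have hl'le' : l' ≤ l := by omega
            exact hdd X Y l' ⟨v', hg', hXYinf⟩ hl'par hl'le' hfX hfY hlevX hlevY
          · -- Y fresh pow
            have hb'b' : [b',b'] <:+: v' := by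
              refine ((replicate_two_prefix hk2').isInfix).trans (List.IsInfix.trans ?_ hinf)
              exact ⟨List.replicate k b, [], by simp⟩
            have hlev2 := ho3 b' ⟨v', hg', hb'b'⟩
            have : symLevel h Y = l + 1 := by
              rw [hS2, image, if_pos hk2', symLevel_pow, hlev2.2]
            omega
        · -- X fresh pow
          have hbb : [b,b] <:+: v' := by
            refine ((replicate_two_prefix hk2).isInfix).trans (List.IsInfix.trans ?_ hinf)
            exact ⟨[], List.replicate k' b', by simp⟩
          have hlev2 := ho3 b ⟨v', hg', hbb⟩
          have : symLevel h X = l + 1 := by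
            rw [hS1, image, if_pos hk2, symLevel_pow, hlev2.2]
          omega
    · -- compress step
      have hpar' : (l+1) % 2 = 0 := by omega
      have hstep : ∀ v : List (Sym α), Gen h (l+1) v →
          ∃ v', Gen h l v' ∧ v = compress (h ((l+1)/2)) v' := by
        intro v hg
        obtain ⟨v', hg', hv⟩ := gen_succ h hg
        exact ⟨v', hg', by rw [hv, shrinkStep_even h hpar']⟩
      refine ⟨?_, ?_, ?_⟩
      · intro S ⟨v, hg, hS⟩
        obtain ⟨v', hg', rfl⟩ := hstep v hg
        rcases compress_occ hS with hv | ⟨c, d, rfl, hc, hd, hcd⟩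
        · exact le_trans (ho1 S ⟨v', hg', hv⟩) (by omega)
        · rw [o4pair h ho1 hdd ⟨v', hg', hcd⟩ hpar' hc hd]
      · intro S ⟨v, hg, hSS⟩
        obtain ⟨v', hg', rfl⟩ := hstep v hg
        rcases compress_adj hSS with ⟨s, t, hst, hnp⟩ | ⟨x, y, h1, h2, h3, h4⟩ |
          ⟨c, d, h1, h2, h3, h4⟩ | ⟨c, d, x, y, h1, h2, h3, h4, h5, h6, h7⟩
        · exfalso
          have : AdjL h l S S := ⟨v', hg', ⟨s, t, by simp [hst]⟩⟩
          have := (ho3 S this).1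
          omega
        · exfalso
          have hadj : AdjL h l x y := ⟨v', hg', by
            refine List.IsInfix.trans ⟨[S], [], by simp⟩ h4⟩
          have hfresh := o4pair h ho1 hdd hadj hpar' h2 h3
          have hold : symLevel h S ≤ l := ho1 S ⟨v', hg', h4.mem (by simp)⟩
          rw [h1, hfresh] at hold
          omega
        · exfalso
          have hadj : AdjL h l c d := ⟨v', hg', by
            refine List.IsInfix.trans ⟨[], [S], by simp⟩ h4⟩
          have hfresh := o4pair h ho1 hdd hadj hpar' h2 h3
          have hold : symLevel h S ≤ l := ho1 S ⟨v', hg', h4.mem (by simp)⟩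
          rw [h1, hfresh] at hold
          omega
        · refine ⟨hpar', ?_⟩
          have hadj : AdjL h l c d := ⟨v', hg', by
            refine List.IsInfix.trans ⟨[], [x,y], by simp⟩ h7⟩
          rw [h1, o4pair h ho1 hdd hadj hpar' h3 h4]
      · intro X Y l' ⟨v, hg, hXY⟩ hl'par hl'le hfX hfY hlevX hlevY
        obtain ⟨v', hg', rfl⟩ := hstep v hg
        rcases compress_adj hXY with ⟨s, t, hst, hnp⟩ | ⟨x, y, h1, h2, h3, h4⟩ |
          ⟨c, d, h1, h2, h3, h4⟩ | ⟨c, d, x, y, h1, h2, h3, h4, h5, h6, h7⟩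
        · have hadj : AdjL h l X Y := ⟨v', hg', ⟨s, t, by simp [hst]⟩⟩
          rcases Nat.lt_or_ge l' (l+1) with hlt | hge
          · exact hdd X Y l' hadj hl'par (by omega) hfX hfY hlevX hlevY
          · have : l' = l + 1 := by omega
            subst this
            exact hnp ⟨hfX, hfY⟩
        · have hadj : AdjL h l x y := ⟨v', hg', List.IsInfix.trans ⟨[X], [], by simp⟩ h4⟩
          have hfresh := o4pair h ho1 hdd hadj hpar' h2 h3
          rw [h1, hfresh] at hlevY
          omega
        · have hadj : AdjL h l c d := ⟨v', hg', List.IsInfix.trans ⟨[], [Y], by simp⟩ h4⟩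
          have hfresh := o4pair h ho1 hdd hadj hpar' h2 h3
          rw [h1, hfresh] at hlevX
          omega
        · have hadj : AdjL h l c d := ⟨v', hg', List.IsInfix.trans ⟨[], [x,y], by simp⟩ h7⟩
          have hfresh := o4pair h ho1 hdd hadj hpar' h3 h4
          rw [h1, hfresh] at hlevX
          omega

end Dev4
end DynStr
namespace DynStr
section Dev5
set_option linter.unusedSectionVars false
set_option linter.unusedVariables false
variable {α : Type} [DecidableEq α] (h : ℕ → Sym α → Bool)

/-- injectivity of a shrink step on prefixes of genuine level-`i` strings -/
lemma step_inj {i : ℕ} {x y : List (Sym α)} {wx wy : List α}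
    (hx : x <+: shrinkIter h i (embed wx)) (hy : y <+: shrinkIter h i (embed wy))
    (heq : shrinkStep h (i+1) x = shrinkStep h (i+1) y) : x = y := by
  obtain ⟨ho1, ho3, hdd⟩ := levels_machinery h i
  have hgx : Gen h i (shrinkIter h i (embed wx)) := ⟨wx, rfl⟩
  have hgy : Gen h i (shrinkIter h i (embed wy)) := ⟨wy, rfl⟩
  by_cases hpar : (i+1) % 2 = 1
  · rw [shrinkStep_odd h hpar, shrinkStep_odd h hpar] at heq
    refine rle_inj hx.isInfix hy.isInfix ?_ heq
    intro b k hk hocc hadj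
    have hOcc : OccL h i (Sym.pow b k) := by
      rcases hocc with hh | hh
      exacts [⟨_, hgx, hh⟩, ⟨_, hgy, hh⟩]
    have hAdj : AdjL h i b b := by
      rcases hadj with hh | hh
      exacts [⟨_, hgx, hh⟩, ⟨_, hgy, hh⟩]
    have h1 := ho1 _ hOcc
    have h2 := (ho3 b hAdj).2
    rw [symLevel_pow, h2] at h1
    omega
  · have hpar' : (i+1) % 2 = 0 := by omega
    rw [shrinkStep_even h hpar', shrinkStep_even h hpar'] at heq
    refine compress_inj ?_ hx.isInfix hy.isInfix heq
    intro c d hc hd hocc hadj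
    have hOcc : OccL h i (Sym.pair c d) := by
      rcases hocc with hh | hh
      exacts [⟨_, hgx, hh⟩, ⟨_, hgy, hh⟩]
    have hAdj : AdjL h i c d := by
      rcases hadj with hh | hh
      exacts [⟨_, hgx, hh⟩, ⟨_, hgy, hh⟩]
    have hlevc : symLevel h c ≤ i := ho1 c (adjL_occL h hAdj).1
    have hlevd : symLevel h d ≤ i := ho1 d (adjL_occL h hAdj).2
    have hlev := ho1 _ hOcc
    rw [symLevel_pair] at hlev
    set T : Set ℕ := {l | l % 2 = 0 ∧ max (symLevel h c) (symLevel h d) < l ∧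
        h (l / 2) c = false ∧ h (l / 2) d = true} with hT
    have hmem : i + 1 ∈ T := ⟨hpar', by simp; omega, hc, hd⟩
    have hinf := Nat.sInf_mem (⟨i+1, hmem⟩ : T.Nonempty)
    obtain ⟨e1, e2, e3, e4⟩ := hinf
    refine hdd c d (sInf T) hAdj e1 hlev e3 e4 ?_ ?_ <;> · simp at e2; omega

lemma shrinkStep_ne_nil {j : ℕ} {v : List (Sym α)} (hv : v ≠ []) :
    shrinkStep h j v ≠ [] := by
  by_cases hpar : j % 2 = 1
  · rw [shrinkStep_odd h hpar]
    simpa [rle_eq_nil]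
  · rw [shrinkStep_even h (by omega)]
    simpa [compress_eq_nil]

end Dev5
end DynStr
namespace DynStr
section Dev6
set_option linter.unusedSectionVars false
set_option linter.unusedVariables false
variable {α : Type} [DecidableEq α] (h : ℕ → Sym α → Bool) (W : Finset (List α))

lemma mem_trieNodes {i : ℕ} {p : List (Sym α)} {w : List α} (hw : w ∈ W)
    (hdep : i ≤ depth h (embed w)) (hp : p <+: shrinkIter h i (embed w)) :
    p ∈ trieNodes h W i := ⟨w, hw, hdep, hp⟩

lemma prefix_snoc_of_proper {β : Type*} {p v : List β} (hp : p <+: v) (hne : p ≠ v) :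
    ∃ σ, p ++ [σ] <+: v := by
  obtain ⟨t, rfl⟩ := hp
  cases t with
  | nil => exact absurd (by simp) hne
  | cons σ t' => exact ⟨σ, t', by simp⟩

lemma snoc_prefix_unique {β : Type*} {p v : List β} {σ τ : β}
    (h1 : p ++ [σ] <+: v) (h2 : p ++ [τ] <+: v) : σ = τ := by
  obtain ⟨t1, ht1⟩ := h1
  obtain ⟨t2, ht2⟩ := h2
  have := ht1.trans ht2.symm
  simp only [List.append_assoc, List.append_cancel_left_eq] at this
  injection this

lemma prefix_replicate {β : Type*} {z : List β} {X : β} :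
    ∀ {n : ℕ}, z <+: List.replicate n X → z = List.replicate z.length X := by
  intro n hz
  refine List.eq_replicate_iff.mpr ⟨rfl, fun b hb => ?_⟩
  have := hz.subset hb
  exact List.eq_of_mem_replicate this

/-- the path lemma: strings passing strictly inside the bare path `G..A` continue to `A`. -/
lemma path_lemma {i : ℕ} {G A : List (Sym α)}
    (hAtrie : A ∈ trieNodes h W i)
    (hnodown : ∀ x, G <+: x → x <+: A → x ≠ G → x ≠ A → ¬ IsDown h W i x) :
    ∀ (n : ℕ) (p : List (Sym α)), A.length - p.length ≤ n → G <+: p → p ≠ G → p <+: A →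
      ∀ {w : List α}, w ∈ W → i ≤ depth h (embed w) →
        p <+: shrinkIter h i (embed w) → A <+: shrinkIter h i (embed w) := by
  intro n
  induction n with
  | zero =>
    intro p hlen hGp hpG hpA w hw hdep hpv
    have hplen : A.length ≤ p.length := by omega
    have : p = A := hpA.eq_of_length (le_antisymm hpA.length_le hplen)
    exact this ▸ hpv
  | succ n ih =>
    intro p hlen hGp hpG hpA w hw hdep hpv
    by_cases hpA' : p = A
    · exact hpA' ▸ hpv
    · obtain ⟨σA, hσA⟩ := prefix_snoc_of_proper hpA hpA'
      have hndp : ¬ IsDown h W i p := hnodown p hGp hpA hpG hpA'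
      have hpv' : p ≠ shrinkIter h i (embed w) := by
        intro hh
        exact hndp ⟨mem_trieNodes h W hw hdep hpv,
          Or.inr (Or.inr ⟨w, hw, hdep, hh⟩)⟩
      obtain ⟨σv, hσv⟩ := prefix_snoc_of_proper hpv hpv'
      have hσ : σv = σA := by
        by_contra hne'
        obtain ⟨wA, hwA, hdepA, hApre⟩ := hAtrie
        exact hndp ⟨mem_trieNodes h W hw hdep hpv,
          Or.inr (Or.inl ⟨σv, σA, hne',
            mem_trieNodes h W hw hdep hσv,
            mem_trieNodes h W hwA hdepA (hσA.trans hApre)⟩)⟩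
      subst hσ
      have hGp' : G <+: p ++ [σv] := hGp.trans ⟨[σv], rfl⟩
      have hpG' : p ++ [σv] ≠ G := by
        intro hh
        have h1 : G.length ≤ p.length := hGp.length_le
        have h2 : (p ++ [σv]).length = G.length := by rw [hh]
        simp at h2
        omega
      exact ih (p ++ [σv]) (by simp; omega) hGp' hpG' hσA hw hdep hσv

end Dev6
end DynStr
namespace DynStr
section Dev7
set_option linter.unusedSectionVars false
set_option linter.unusedVariables false
variable {α : Type} [DecidableEq α]

lemma prefix_proper_length {β : Type*} {p q : List β} (hp : p <+: q) (hne : p ≠ q) :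
    p.length < q.length :=
  lt_of_le_of_ne hp.length_le (fun hh => hne (hp.eq_of_length hh))

lemma prefix_cancel_left {β : Type*} {l z y : List β} (hp : l ++ z <+: l ++ y) : z <+: y := by
  obtain ⟨t, ht⟩ := hp
  rw [List.append_assoc] at ht
  exact ⟨t, List.append_cancel_left ht⟩

lemma replicate_prefix_replicate {β : Type*} {b : β} {k₁ k₂ : ℕ} (hk : k₁ ≤ k₂) :
    List.replicate k₁ b <+: List.replicate k₂ b :=
  ⟨List.replicate (k₂ - k₁) b, by rw [← List.replicate_add]; congr 1; omega⟩

lemma snoc_prefix_of_decomp {β : Type*} {v p r : List β} {b : β} {k : ℕ}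
    (hv : v = p ++ List.replicate k b ++ r) (hk : 1 ≤ k) : p ++ [b] <+: v := by
  obtain ⟨m, rfl⟩ : ∃ m, k = m + 1 := ⟨k-1, by omega⟩
  rw [hv, List.replicate_succ]
  exact ⟨List.replicate m b ++ r, by simp⟩

lemma getLast?_append_replicate {β : Type*} {p : List β} {b : β} {m : ℕ} (hm : 1 ≤ m) :
    (p ++ List.replicate m b).getLast? = some b := by
  obtain ⟨n, rfl⟩ : ∃ n, m = n + 1 := ⟨m-1, by omega⟩
  rw [List.replicate_succ', ← List.append_assoc, List.getLast?_concat]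

lemma prefix_append_left {β : Type*} {l a b : List β} (hp : a <+: b) :
    l ++ a <+: l ++ b := by
  obtain ⟨t, rfl⟩ := hp
  exact ⟨t, by rw [List.append_assoc]⟩

lemma prefix_of_eq_append {β : Type*} {v p m r : List β} (hv : v = p ++ m ++ r) :
    p <+: v := ⟨m ++ r, by rw [hv, List.append_assoc]⟩

lemma prefix_of_eq_single {β : Type*} {v p r : List β} {S : β} (hv : v = p ++ [S] ++ r) :
    p ++ [S] <+: v := ⟨r, by rw [hv]⟩

lemma snoc_prefix_of_pair_decomp {β : Type*} {v p r : List β} {x y : β}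
    (hv : v = p ++ [x,y] ++ r) : p ++ [x] <+: v := ⟨y :: r, by rw [hv]; simp⟩

lemma snoc2_prefix_of_pair_decomp {β : Type*} {v p r : List β} {x y : β}
    (hv : v = p ++ [x,y] ++ r) : (p ++ [x]) ++ [y] <+: v := ⟨r, by rw [hv]; simp⟩

lemma main_aux (h : ℕ → Sym α → Bool) (W : Finset (List α)) (i : ℕ) (G A : List (Sym α))
    (hA : IsDown h W i A)
    (hnodown : ∀ x, G <+: x → x <+: A → x ≠ G → x ≠ A → ¬ IsDown h W i x)
    (p q : List (Sym α))
    (hGp : G <+: p) (hpA : p <+: A) (hpG : p ≠ G) (hpA' : p ≠ A)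
    (hGq : G <+: q) (hqA : q <+: A) (hqG : q ≠ G) (hqA' : q ≠ A)
    (hupp : IsUp h W i p) (hupq : IsUp h W i q)
    (hpq : p <+: q) (hnepq : p ≠ q) : False := by
  obtain ⟨hptrie, ap, hapDown, hapT, hptrie2, hapEq⟩ := hupp
  obtain ⟨hqtrie, aq, haqDown, haqT, hqtrie2, haqEq⟩ := hupq
  obtain ⟨wp, hwp, hdepp, hppre⟩ := hptrie
  obtain ⟨wq, hwq, hdepq, hqpre⟩ := hqtrie
  have hAtrie : A ∈ trieNodes h W i := hA.1
  -- nonemptiness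
  have hGlenp : G.length < p.length := prefix_proper_length hGp (fun hh => hpG hh.symm)
  have hGlenq : G.length < q.length := prefix_proper_length hGq (fun hh => hqG hh.symm)
  have hlenpq : p.length < q.length := prefix_proper_length hpq hnepq
  have hlenqA : q.length < A.length := prefix_proper_length hqA hqA'
  have hpne : p ≠ [] := by intro hh; subst hh; simp at hGlenp
  have hqne : q ≠ [] := by intro hh; subst hh; simp at hGlenq
  -- path lemma, specialized
  have path : ∀ (r : List (Sym α)), G <+: r → r ≠ G → r <+: A →
      ∀ {w : List α}, w ∈ W → i ≤ depth h (embed w) →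
        r <+: shrinkIter h i (embed w) → A <+: shrinkIter h i (embed w) := by
    intro r h1 h2 h3 w hw hdep hpre
    exact path_lemma h W hAtrie hnodown A.length r (by omega) h1 h2 h3 hw hdep hpre
  -- both links are branching down-nodes
  have getBranch : ∀ (r : List (Sym α)) (ar : List (Sym α)), r ≠ [] →
      (∀ {wr : List α}, wr ∈ W → i ≤ depth h (embed wr) →
        r <+: shrinkIter h i (embed wr) → True) →
      r <+: shrinkIter h i (embed wp) ∨ r <+: shrinkIter h i (embed wq) →
      G <+: r → r <+: A → r ≠ G → r ≠ A →
      IsDown h W (i+1) ar → ar = shrinkStep h (i+1) r →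
      ∃ S T, S ≠ T ∧ shrinkStep h (i+1) r ++ [S] ∈ trieNodes h W (i+1) ∧
        shrinkStep h (i+1) r ++ [T] ∈ trieNodes h W (i+1) := by
    intro r ar hrne _ hrpre hGr hrA hrG hrA'
    rintro ⟨harT, hcase⟩ harEq
    have hstep_ne : ar ≠ [] := by
      rw [harEq]
      exact shrinkStep_ne_nil h hrne
    rcases hcase with hnil | hbr | ⟨w', hw', hdep', hleaf⟩
    · exact absurd hnil hstep_ne
    · obtain ⟨S, T, hST, hSm, hTm⟩ := hbr
      exact ⟨S, T, hST, harEq ▸ hSm, harEq ▸ hTm⟩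
    · exfalso
      -- leaf case: r would be an internal down-node
      have hleaf' : shrinkStep h (i+1) r =
          shrinkStep h (i+1) (shrinkIter h i (embed w')) := by
        rw [← harEq, hleaf]; rfl
      have hreq : r = shrinkIter h i (embed w') := by
        rcases hrpre with hh | hh
        · exact step_inj h hh (List.prefix_refl _) hleaf'
        · exact step_inj h hh (List.prefix_refl _) hleaf'
      have : IsDown h W i r := by
        refine ⟨?_, Or.inr (Or.inr ⟨w', hw', by omega, hreq⟩)⟩
        rcases hrpre with hh | hh
        · exact mem_trieNodes h W hwp hdepp hh
        · exact mem_trieNodes h W hwq hdepq hh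
      exact hnodown r hGr hrA hrG hrA' this
  obtain ⟨S, T, hST, hSmem, hTmem⟩ :=
    getBranch p ap hpne (fun _ _ _ => trivial) (Or.inl hppre) hGp hpA hpG hpA' hapDown hapEq
  obtain ⟨S₂, T₂, hST₂, hS₂mem, hT₂mem⟩ :=
    getBranch q aq hqne (fun _ _ _ => trivial) (Or.inr hqpre) hGq hqA hqG hqA' haqDown haqEq
  -- the next symbol of A after p and after q
  obtain ⟨X, hXA⟩ := prefix_snoc_of_proper hpA hpA'
  by_cases hpar : (i+1) % 2 = 1
  · ---- rle case
    have pull : ∀ (r : List (Sym α)) {wr : List α}, r <+: shrinkIter h i (embed wr) →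
        ∀ {S' : Sym α}, shrinkStep h (i+1) r ++ [S'] ∈ trieNodes h W (i+1) →
        ∃ (w₁ : List α) (b : Sym α) (k : ℕ) (r₁ : List (Sym α)), w₁ ∈ W ∧
          i ≤ depth h (embed w₁) ∧
          shrinkIter h i (embed w₁) = r ++ List.replicate k b ++ r₁ ∧ 1 ≤ k ∧
          S' = image (b,k) ∧ r.getLast? ≠ some b ∧ (∀ c ∈ r₁.head?, c ≠ b) := by
      intro r wr hrpre S' hmem
      obtain ⟨w₁, hw₁, hdep₁, hpre₁⟩ := hmem
      rw [shrinkIter_succ, shrinkStep_odd h hpar, shrinkStep_odd h hpar] at hpre₁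
      obtain ⟨u, b, k, r₁, hveq, hrleu, hk, hSimg, hulast, hrhead⟩ := rle_prefix_snoc hpre₁
      have hupre : u <+: shrinkIter h i (embed w₁) :=
        ⟨List.replicate k b ++ r₁, by rw [hveq]; simp⟩
      have hur : u = r := by
        refine step_inj h hupre hrpre ?_
        rw [shrinkStep_odd h hpar, shrinkStep_odd h hpar]
        exact hrleu
      subst hur
      exact ⟨w₁, b, k, r₁, hw₁, by omega, hveq, hk, hSimg, hulast, hrhead⟩
    obtain ⟨wS, bS, kS, rS, hwS, hdepS, hvS, hkS, hSimg, hlastS, hheadS⟩ := pull p hppre hSmem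
    obtain ⟨wT, bT, kT, rT, hwT, hdepT, hvT, hkT, hTimg, hlastT, hheadT⟩ := pull p hppre hTmem
    have hAvS : A <+: shrinkIter h i (embed wS) :=
      path p hGp hpG hpA hwS hdepS (prefix_of_eq_append hvS)
    have hAvT : A <+: shrinkIter h i (embed wT) :=
      path p hGp hpG hpA hwT hdepT (prefix_of_eq_append hvT)
    have hbSX : bS = X :=
      snoc_prefix_unique (snoc_prefix_of_decomp hvS hkS) (hXA.trans hAvS)
    have hbTX : bT = X :=
      snoc_prefix_unique (snoc_prefix_of_decomp hvT hkT) (hXA.trans hAvT)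
    rw [hbSX] at hvS hheadS hSimg
    rw [hbTX] at hvT hheadT hTimg
    have hkne : kS ≠ kT := by
      intro hh
      exact hST (by rw [hSimg, hTimg, hh])
    -- core argument, symmetric in the two children
    have core : ∀ (k₁ k₂ : ℕ) (r₁ r₂ : List (Sym α)) (w₁ w₂ : List α),
        w₁ ∈ W → w₂ ∈ W → i ≤ depth h (embed w₁) → i ≤ depth h (embed w₂) →
        shrinkIter h i (embed w₁) = p ++ List.replicate k₁ X ++ r₁ →
        shrinkIter h i (embed w₂) = p ++ List.replicate k₂ X ++ r₂ →
        1 ≤ k₁ → k₁ < k₂ → (∀ c ∈ r₁.head?, c ≠ X) →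
        ∃ t, 1 ≤ t ∧ A = p ++ List.replicate t X := by
      intro k₁ k₂ r₁ r₂ w₁ w₂ hw₁ hw₂ hdep₁ hdep₂ hv₁ hv₂ hk₁ hk₁₂ hhead₁
      have hPv₂ : p ++ List.replicate k₁ X <+: shrinkIter h i (embed w₂) := by
        rw [hv₂]
        exact (prefix_append_left (replicate_prefix_replicate (le_of_lt hk₁₂))).trans ⟨r₂, rfl⟩
      have hAv₂ : A <+: shrinkIter h i (embed w₂) :=
        path p hGp hpG hpA hw₂ hdep₂ (prefix_of_eq_append hv₂)
      rcases List.prefix_or_prefix_of_prefix hAv₂ hPv₂ with hAP | hPA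
      · -- A is a prefix of p ++ X^k₁
        obtain ⟨z, hAz⟩ := hpA
        have hz : z <+: List.replicate k₁ X := by
          refine prefix_cancel_left (l := p) ?_
          rw [hAz]; exact hAP
        have hzrep := prefix_replicate hz
        refine ⟨z.length, ?_, by rw [← hAz, hzrep, List.length_replicate]⟩
        rcases Nat.eq_zero_or_pos z.length with hz0 | hz1
        · exfalso
          have : z = [] := List.length_eq_zero_iff.mp hz0
          subst this
          simp at hAz
          exact hpA' hAz
        · exact hz1
      · -- p ++ X^k₁ is a prefix of A
        by_cases hPA' : p ++ List.replicate k₁ X = A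
        · exact ⟨k₁, hk₁, hPA'.symm⟩
        · exfalso
          have hPG : p ++ List.replicate k₁ X ≠ G := by
            intro hh
            have : (p ++ List.replicate k₁ X).length = G.length := by rw [hh]
            simp at this
            omega
          refine hnodown (p ++ List.replicate k₁ X) (hGp.trans ⟨_, rfl⟩) hPA hPG hPA' ?_
          refine ⟨mem_trieNodes h W hw₂ hdep₂ hPv₂, ?_⟩
          rcases hr₁ : r₁ with _ | ⟨c, r₁'⟩
          · -- leaf
            refine Or.inr (Or.inr ⟨w₁, hw₁, hdep₁, ?_⟩)
            show p ++ List.replicate k₁ X = shrinkIter h i (embed w₁)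
            rw [hv₁, hr₁]
            simp
          · -- branching
            have hcX : c ≠ X := hhead₁ c (by rw [hr₁]; rfl)
            have hPc : (p ++ List.replicate k₁ X) ++ [c] <+: shrinkIter h i (embed w₁) := by
              have : shrinkIter h i (embed w₁) = (p ++ List.replicate k₁ X) ++ [c] ++ r₁' := by
                rw [hv₁, hr₁]; simp
              exact prefix_of_eq_single this
            have hPX : (p ++ List.replicate k₁ X) ++ [X] <+: shrinkIter h i (embed w₂) := by
              have he : (p ++ List.replicate k₁ X) ++ [X] = p ++ List.replicate (k₁+1) X := by
                rw [List.replicate_succ', List.append_assoc]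
              rw [he, hv₂]
              exact (prefix_append_left (replicate_prefix_replicate (by omega))).trans ⟨r₂, rfl⟩
            exact Or.inr (Or.inl ⟨c, X, hcX,
              mem_trieNodes h W hw₁ hdep₁ hPc,
              mem_trieNodes h W hw₂ hdep₂ hPX⟩)
    have hform : ∃ t, 1 ≤ t ∧ A = p ++ List.replicate t X := by
      rcases Nat.lt_or_ge kS kT with hlt | hge
      · exact core kS kT rS rT wS wT hwS hwT hdepS hdepT hvS hvT hkS hlt hheadS
      · exact core kT kS rT rS wT wS hwT hwS hdepT hdepS hvT hvS hkT (by omega) hheadT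
    obtain ⟨t, ht1, hAeq⟩ := hform
    -- q = p ++ X^m
    obtain ⟨z₂, hqz⟩ := hpq
    have hz₂ : z₂ <+: List.replicate t X := by
      refine prefix_cancel_left (l := p) ?_
      rw [hqz, ← hAeq]
      exact hqA
    have hz₂rep := prefix_replicate hz₂
    have hm1 : 1 ≤ z₂.length := by
      rcases Nat.eq_zero_or_pos z₂.length with h0 | h1
      · exfalso
        have : z₂ = [] := List.length_eq_zero_iff.mp h0
        subst this
        simp at hqz
        exact hnepq hqz
      · exact h1
    have hqlast : q.getLast? = some X := by
      rw [← hqz, hz₂rep]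
      exact getLast?_append_replicate hm1
    have hmt : z₂.length < t := by
      have h1 : q.length = p.length + z₂.length := by rw [← hqz]; simp
      have h2 : A.length = p.length + t := by rw [hAeq]; simp
      omega
    have hqXA : q ++ [X] <+: A := by
      have : A = q ++ List.replicate (t - z₂.length) X ++ [] := by
        rw [← hqz, hz₂rep, hAeq]
        simp [← List.replicate_add]
        congr 1
        omega
      exact snoc_prefix_of_decomp this (by omega)
    -- now pull the child of q
    obtain ⟨w₁', b', k', r₁', hw₁', hdep₁', hv₁', hk', _, hlast', _⟩ := pull q hqpre hS₂mem
    have hAv' : A <+: shrinkIter h i (embed w₁') :=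
      path q hGq hqG hqA hw₁' hdep₁' (prefix_of_eq_append hv₁')
    have hb'X : b' = X :=
      snoc_prefix_unique (snoc_prefix_of_decomp hv₁' hk') ((hqXA).trans hAv')
    rw [hb'X] at hlast'
    exact hlast' hqlast
  · ---- compress case
    have hpar' : (i+1) % 2 = 0 := by omega
    set g := h ((i+1)/2) with hg
    have pull2 : ∀ (r : List (Sym α)) {wr : List α}, r <+: shrinkIter h i (embed wr) →
        ∀ {S' : Sym α}, shrinkStep h (i+1) r ++ [S'] ∈ trieNodes h W (i+1) →
        ∃ (w₁ : List α) (r₁ : List (Sym α)), w₁ ∈ W ∧ i ≤ depth h (embed w₁) ∧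
          ((shrinkIter h i (embed w₁) = r ++ [S'] ++ r₁ ∧
            (∀ c ∈ r₁.head?, ¬(g S' = false ∧ g c = true))) ∨
           (∃ x y, shrinkIter h i (embed w₁) = r ++ [x,y] ++ r₁ ∧ S' = Sym.pair x y ∧
            g x = false ∧ g y = true)) := by
      intro r wr hrpre S' hmem
      obtain ⟨w₁, hw₁, hdep₁, hpre₁⟩ := hmem
      rw [shrinkIter_succ, shrinkStep_even h hpar', shrinkStep_even h hpar'] at hpre₁
      rcases compress_prefix_snoc hpre₁ with ⟨u, r₁, hveq, hcu, hbound⟩ |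
        ⟨u, x, y, r₁, hveq, hcu, hSxy, hgx, hgy⟩
      · have hupre : u <+: shrinkIter h i (embed w₁) := ⟨[S'] ++ r₁, by rw [hveq]; simp⟩
        have hur : u = r := by
          refine step_inj h hupre hrpre ?_
          rw [shrinkStep_even h hpar', shrinkStep_even h hpar']
          exact hcu
        subst hur
        exact ⟨w₁, r₁, hw₁, by omega, Or.inl ⟨hveq, hbound⟩⟩
      · have hupre : u <+: shrinkIter h i (embed w₁) := ⟨[x,y] ++ r₁, by rw [hveq]; simp⟩
        have hur : u = r := by
          refine step_inj h hupre hrpre ?_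
          rw [shrinkStep_even h hpar', shrinkStep_even h hpar']
          exact hcu
        subst hur
        exact ⟨w₁, r₁, hw₁, by omega, Or.inr ⟨x, y, hveq, hSxy, hgx, hgy⟩⟩
    obtain ⟨wS, rS, hwS, hdepS, hformS⟩ := pull2 p hppre hSmem
    obtain ⟨wT, rT, hwT, hdepT, hformT⟩ := pull2 p hppre hTmem
    have hAvS : A <+: shrinkIter h i (embed wS) := by
      rcases hformS with ⟨hv, _⟩ | ⟨x, y, hv, _, _, _⟩
      · exact path p hGp hpG hpA hwS hdepS (prefix_of_eq_append hv)
      · exact path p hGp hpG hpA hwS hdepS (prefix_of_eq_append hv)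
    have hAvT : A <+: shrinkIter h i (embed wT) := by
      rcases hformT with ⟨hv, _⟩ | ⟨x, y, hv, _, _, _⟩
      · exact path p hGp hpG hpA hwT hdepT (prefix_of_eq_append hv)
      · exact path p hGp hpG hpA hwT hdepT (prefix_of_eq_append hv)
    have hPXA : p ++ [X] <+: A := hXA
    have hPne : p ++ [X] ≠ A := by
      intro hh
      have : A.length = p.length + 1 := by rw [← hh]; simp
      omega
    have hPG : p ++ [X] ≠ G := by
      intro hh
      have : (p ++ [X]).length = G.length := by rw [hh]
      simp at this
      omega
    -- mixed case helper: one singleton child, one pair child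
    have mixed : ∀ (w₁ w₂ : List α) (r₁ r₂ : List (Sym α)) (y : Sym α),
        w₁ ∈ W → w₂ ∈ W → i ≤ depth h (embed w₁) → i ≤ depth h (embed w₂) →
        shrinkIter h i (embed w₁) = p ++ [X] ++ r₁ →
        (∀ c ∈ r₁.head?, ¬(g X = false ∧ g c = true)) →
        shrinkIter h i (embed w₂) = p ++ [X, y] ++ r₂ →
        g X = false → g y = true → False := by
      intro w₁ w₂ r₁ r₂ y hw₁ hw₂ hdep₁ hdep₂ hv₁ hb₁ hv₂ hgX hgy
      refine hnodown (p ++ [X]) (hGp.trans ⟨_, rfl⟩) hPXA hPG hPne ?_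
      refine ⟨mem_trieNodes h W hw₂ hdep₂ (snoc_prefix_of_pair_decomp hv₂), ?_⟩
      rcases hr₁ : r₁ with _ | ⟨c, r₁'⟩
      · refine Or.inr (Or.inr ⟨w₁, hw₁, hdep₁, ?_⟩)
        show p ++ [X] = shrinkIter h i (embed w₁)
        rw [hv₁, hr₁]
        simp
      · have hcy : c ≠ y := by
          intro hh
          exact hb₁ c (by rw [hr₁]; rfl) ⟨hgX, hh ▸ hgy⟩
        refine Or.inr (Or.inl ⟨c, y, hcy, ?_, ?_⟩)
        · refine mem_trieNodes h W hw₁ hdep₁ ?_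
          have : shrinkIter h i (embed w₁) = (p ++ [X]) ++ [c] ++ r₁' := by
            rw [hv₁, hr₁]; simp
          exact prefix_of_eq_single this
        · refine mem_trieNodes h W hw₂ hdep₂ ?_
          have : shrinkIter h i (embed w₂) = (p ++ [X]) ++ [y] ++ r₂ := by
            rw [hv₂]; simp
          exact prefix_of_eq_single this
    rcases hformS with ⟨hvS, hbS⟩ | ⟨xS, yS, hvS, hSxy, hgxS, hgyS⟩ <;>
      rcases hformT with ⟨hvT, hbT⟩ | ⟨xT, yT, hvT, hTxy, hgxT, hgyT⟩
    · -- both singletons: S = X = T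
      have hSX : S = X := snoc_prefix_unique (prefix_of_eq_single hvS) (hXA.trans hAvS)
      have hTX : T = X := snoc_prefix_unique (prefix_of_eq_single hvT) (hXA.trans hAvT)
      exact hST (hSX.trans hTX.symm)
    · -- S singleton, T pair
      have hSX : S = X := snoc_prefix_unique (prefix_of_eq_single hvS) (hXA.trans hAvS)
      have hxTX : xT = X := snoc_prefix_unique
        (snoc_prefix_of_pair_decomp hvT) (hXA.trans hAvT)
      rw [hSX] at hvS hbS
      rw [hxTX] at hvT hgxT
      exact mixed wS wT rS rT yT hwS hwT hdepS hdepT hvS hbS hvT hgxT hgyT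
    · -- S pair, T singleton
      have hTX : T = X := snoc_prefix_unique (prefix_of_eq_single hvT) (hXA.trans hAvT)
      have hxSX : xS = X := snoc_prefix_unique
        (snoc_prefix_of_pair_decomp hvS) (hXA.trans hAvS)
      rw [hTX] at hvT hbT
      rw [hxSX] at hvS hgxS
      exact mixed wT wS rT rS yS hwT hwS hdepT hdepS hvT hbT hvS hgxS hgyS
    · -- both pairs
      have hxSX : xS = X := snoc_prefix_unique
        (snoc_prefix_of_pair_decomp hvS) (hXA.trans hAvS)
      have hxTX : xT = X := snoc_prefix_unique
        (snoc_prefix_of_pair_decomp hvT) (hXA.trans hAvT)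
      rw [hxSX] at hvS
      rw [hxTX] at hvT
      have hyne : yS ≠ yT := by
        intro hh
        refine hST ?_
        rw [hSxy, hTxy, hxSX, hxTX, hh]
      refine hnodown (p ++ [X]) (hGp.trans ⟨_, rfl⟩) hPXA hPG hPne ?_
      refine ⟨mem_trieNodes h W hwS hdepS (snoc_prefix_of_pair_decomp hvS), ?_⟩
      refine Or.inr (Or.inl ⟨yS, yT, hyne, ?_, ?_⟩)
      · exact mem_trieNodes h W hwS hdepS (snoc2_prefix_of_pair_decomp hvS)
      · exact mem_trieNodes h W hwT hdepT (snoc2_prefix_of_pair_decomp hvT)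

end Dev7
end DynStr
namespace DynStr

/-- Let `G` and `A` be down-nodes of `T̄ᵢ` such that `G` is a proper
ancestor of `A` and the path from `G` to `A` contains no internal down-nodes. Then this
path contains at most one internal up-node. -/
theorem at_most_one_internal_up_node
    {α : Type} [DecidableEq α] (h : ℕ → Sym α → Bool) (W : Finset (List α))
    (i : ℕ) (G A : List (Sym α))
    (hG : IsDown h W i G) (hA : IsDown h W i A)
    (hanc : G <+: A) (hne : G ≠ A)
    (hnodown : ∀ q, G <+: q → q <+: A → q ≠ G → q ≠ A → ¬ IsDown h W i q) :
    ∀ q₁ q₂, G <+: q₁ → q₁ <+: A → q₁ ≠ G → q₁ ≠ A →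
             G <+: q₂ → q₂ <+: A → q₂ ≠ G → q₂ ≠ A →
             IsUp h W i q₁ → IsUp h W i q₂ → q₁ = q₂ := by
  intro q₁ q₂ hGq₁ hq₁A hq₁G hq₁A' hGq₂ hq₂A hq₂G hq₂A' hup₁ hup₂
  by_contra hne12
  rcases List.prefix_or_prefix_of_prefix hq₁A hq₂A with hc | hc
  · exact main_aux h W i G A hA hnodown q₁ q₂ hGq₁ hq₁A hq₁G hq₁A' hGq₂ hq₂A hq₂G hq₂A'
      hup₁ hup₂ hc hne12
  · exact main_aux h W i G A hA hnodown q₂ q₁ hGq₂ hq₂A hq₂G hq₂A' hGq₁ hq₁A hq₁G hq₁A'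
      hup₂ hup₁ hc (Ne.symm hne12)

end DynStr
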